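/- arXiv:1602.07967 — 13 statements merged into one kernel-verified Lean document; each statement's English description precedes it below -/
import Mathlib

section
/- Let d ≥ 0 and t > 0 be integers. Let U ∈ M₂(ℝ) be the counterclockwise rotation matrix by angle π/(2t), i.e. U = [[cos(π/(2t)), −sin(π/(2t))], [sin(π/(2t)), cos(π/(2t))]], and let u₀ = (cos(dπ/(2t)), −sin(dπ/(2t))) ∈ ℝ². Then U^d u₀ = (1, 0) and U^{d+t} u₀ = (0, 1). Consequently, the 2-state MCQFA with initial state u₀, transition matrix U for the single symbol a, and accepting coordinate 1 accepts a^d with probability 1 and accepts a^{d+t} with probability 0, i.e. it separates the unary pair (a^d, a^{d+t}) exactly. -/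
/-!
`u₀` is the unit vector at angle `-dθ`, so `Uⁿ u₀` is the unit vector at angle `(n - d)θ`:
angle `0` for `n = d` and angle `tθ = π/2` for `n = d + t`.
-/

open Real Matrix

noncomputable def rotationMatrix (θ : ℝ) : Matrix (Fin 2) (Fin 2) ℝ :=
  !![cos θ, -sin θ; sin θ, cos θ]

lemma rotationMatrix_zero : rotationMatrix 0 = 1 := by
  simp [rotationMatrix, one_fin_two]

lemma rotationMatrix_mul (a b : ℝ) :
    rotationMatrix a * rotationMatrix b = rotationMatrix (a + b) := by
  simp only [rotationMatrix, mul_fin_two, cos_add, sin_add]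
  congr 1; ring_nf

lemma rotationMatrix_pow (θ : ℝ) (n : ℕ) : rotationMatrix θ ^ n = rotationMatrix (n * θ) := by
  induction n with
  | zero => simp [rotationMatrix_zero]
  | succ n ih => rw [pow_succ, ih, rotationMatrix_mul]; push_cast; ring_nf

lemma rotationMatrix_mulVec_unit (a b : ℝ) :
    rotationMatrix a *ᵥ ![cos b, sin b] = ![cos (a + b), sin (a + b)] := by
  ext i
  fin_cases i <;> simp [rotationMatrix, cos_add, sin_add] <;> ring

/-- the 2-state MCQFA `R_{d,t}` (rotation by `π/(2t)`, initial state obtained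
by a clockwise rotation by `dπ/(2t)` from `(1,0)`, accepting coordinate 1) separates the
unary pair `(a^d, a^{d+t})` exactly. -/
theorem stmt0 (d t : ℕ) (ht : 0 < t) :
    let θ : ℝ := π / (2 * t)
    let U : Matrix (Fin 2) (Fin 2) ℝ :=
      !![Real.cos θ, -Real.sin θ; Real.sin θ, Real.cos θ]
    let u₀ : Fin 2 → ℝ := ![Real.cos (d * θ), -Real.sin (d * θ)]
    (U ^ d).mulVec u₀ = ![1, 0] ∧
    (U ^ (d + t)).mulVec u₀ = ![0, 1] ∧
    ((U ^ d).mulVec u₀ 0) ^ 2 = 1 ∧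
    ((U ^ (d + t)).mulVec u₀ 0) ^ 2 = 0 := by
  intro θ U u₀
  have hU : U = rotationMatrix θ := rfl
  have hu₀ : u₀ = ![cos (-(d * θ)), sin (-(d * θ))] := by simp [u₀]
  have hquarter : (t : ℝ) * θ = π / 2 := by
    simp only [θ]; field_simp [ht.ne']
  have hd : (U ^ d).mulVec u₀ = ![1, 0] := by
    rw [hU, hu₀, rotationMatrix_pow, rotationMatrix_mulVec_unit, add_neg_cancel]
    simp
  have hdt : (U ^ (d + t)).mulVec u₀ = ![0, 1] := by
    rw [hU, hu₀, rotationMatrix_pow, rotationMatrix_mulVec_unit]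
    push_cast
    rw [add_mul, add_neg_cancel_comm, hquarter]
    simp
  exact ⟨hd, hdt, by simp [hd], by simp [hdt]⟩
end

section
/- Let x and y be distinct words over an alphabet Σ such that |x|_σ = |y|_σ for every σ ∈ Σ (a hard pair; in particular |x| = |y|). Then there exist two distinct symbols σ, σ' ∈ Σ such that the words x' and y' obtained from x and y by deleting all symbols other than σ and σ' (i.e. filtering to the sub-alphabet {σ, σ'}) are distinct; moreover |x'|_σ = |y'|_σ and |x'|_{σ'} = |y'|_{σ'}, so (x', y') is a hard pair over the binary alphabet {σ, σ'}. -/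
/-!
Two distinct words of equal length have a first position where they differ, carrying letters
`σ ≠ σ'`. Filtering to `{σ, σ'}` keeps both letters and maps the common prefix to a common
prefix, so the filtered words still differ there; and filtering to a sub-alphabet does not
change the number of occurrences of a letter it keeps.
-/

namespace List

variable {α : Type*} [DecidableEq α]

theorem exists_ne_forall_filter_ne_of_length_eq :
    ∀ {x y : List α}, x ≠ y → x.length = y.length →
      ∃ a b, a ≠ b ∧ ∀ p : α → Bool, p a → p b → x.filter p ≠ y.filter p
  | [], [], hxy, _ => absurd rfl hxy
  | a :: xs, b :: ys, hxy, hlen => by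
    by_cases hab : a = b
    · subst hab
      have htail : xs ≠ ys := fun h => hxy (h ▸ rfl)
      obtain ⟨c, d, hcd, hfilter⟩ :=
        exists_ne_forall_filter_ne_of_length_eq htail (Nat.succ.inj hlen)
      refine ⟨c, d, hcd, fun p hc hd => ?_⟩
      cases hp : p a <;> simpa [filter_cons, hp] using hfilter p hc hd
    · refine ⟨a, b, hab, fun p ha hb => ?_⟩
      simp [ha, hb, hab]

end List

/-- any hard pair over an arbitrary alphabet can be reduced, by filtering
to a suitable two-letter sub-alphabet, to a hard pair over a binary alphabet. -/
theorem stmt2 {Sig : Type*} [DecidableEq Sig] (x y : List Sig) (hxy : x ≠ y)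
    (hhard : ∀ σ : Sig, x.count σ = y.count σ) :
    ∃ σ σ' : Sig, σ ≠ σ' ∧
      x.filter (fun c => decide (c = σ ∨ c = σ')) ≠
        y.filter (fun c => decide (c = σ ∨ c = σ')) ∧
      (x.filter (fun c => decide (c = σ ∨ c = σ'))).count σ =
        (y.filter (fun c => decide (c = σ ∨ c = σ'))).count σ ∧
      (x.filter (fun c => decide (c = σ ∨ c = σ'))).count σ' =
        (y.filter (fun c => decide (c = σ ∨ c = σ'))).count σ' := by
  have hlen : x.length = y.length := (List.perm_iff_count.mpr hhard).length_eq
  obtain ⟨σ, σ', hne, hfilter⟩ := List.exists_ne_forall_filter_ne_of_length_eq hxy hlen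
  refine ⟨σ, σ', hne, hfilter _ (by simp) (by simp), ?_, ?_⟩ <;>
    rw [List.count_filter (by simp), List.count_filter (by simp)] <;>
    exact hhard _
end

section
/- Let U_a, U_b be real orthogonal 2×2 matrices and u₀ ∈ ℝ². Let x and y be words over {a, b} such that each of x and y is a concatenation of the two-letter blocks aa and bb, and such that |x|_a = |y|_a and |x|_b = |y|_b. Then the final states coincide: U_{x_n}⋯U_{x₁} u₀ = U_{y_m}⋯U_{y₁} u₀. Consequently, for every choice of accepting coordinates the acceptance probabilities of x and y are equal, so no 2-state nondeterministic MCQFA with real entries can separate x and y. -/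
/-!
The square of a `2 × 2` orthogonal matrix has determinant `1`, so it is a rotation, and rotations
of the plane commute. A word made of the blocks `aa` and `bb` therefore acts as
`(U_a²)^p (U_b²)^q`, where `2p` and `2q` are its numbers of `a`s and `b`s.
-/

open Matrix

namespace Matrix

theorem mul_self_mem_specialOrthogonalGroup {n R : Type*} [Fintype n] [DecidableEq n]
    [CommRing R] {A : Matrix n n R} (hA : Aᵀ * A = 1) :
    A * A ∈ specialOrthogonalGroup n R := by
  have hA' : A ∈ orthogonalGroup n R := (mem_orthogonalGroup_iff' n R).mpr hA
  refine mem_specialOrthogonalGroup_iff.mpr ⟨Submonoid.mul_mem _ hA' hA', ?_⟩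
  calc (A * A).det = (Aᵀ * A).det := by rw [det_mul, det_mul, det_transpose]
    _ = 1 := by rw [hA, det_one]

theorem commute_of_mem_specialOrthogonalGroup_fin_two {R : Type*} [CommRing R]
    {A B : Matrix (Fin 2) (Fin 2) R} (hA : A ∈ specialOrthogonalGroup (Fin 2) R)
    (hB : B ∈ specialOrthogonalGroup (Fin 2) R) : Commute A B := by
  obtain ⟨hA₁, hA₂, -⟩ := mem_specialOrthogonalGroup_fin_two_iff.mp hA
  obtain ⟨hB₁, hB₂, -⟩ := mem_specialOrthogonalGroup_fin_two_iff.mp hB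
  ext i j
  fin_cases i <;> fin_cases j <;> simp [mul_apply, Fin.sum_univ_two, hA₁, hA₂, hB₁, hB₂] <;> ring

theorem foldl_mulVec {α m R : Type*} [Fintype m] [DecidableEq m] [CommSemiring R]
    (U : α → Matrix m m R) (l : List α) (u : m → R) :
    l.foldl (fun v c => (U c).mulVec v) u = (l.reverse.map U).prod *ᵥ u := by
  induction l generalizing u with
  | nil => simp
  | cons c l ih => simp [ih, mulVec_mulVec]

end Matrix

theorem List.prod_map_reverse_flatten_of_forall_eq_pair {M : Type*} [Monoid M] (f : Fin 2 → M)
    (hf : Commute (f 0 ^ 2) (f 1 ^ 2)) (l : List (List (Fin 2)))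
    (hl : ∀ w ∈ l, w = [0, 0] ∨ w = [1, 1]) :
    (l.flatten.reverse.map f).prod =
      (f 0 ^ 2) ^ (l.flatten.count 0 / 2) * (f 1 ^ 2) ^ (l.flatten.count 1 / 2) := by
  induction l with
  | nil => simp
  | cons w l ih =>
    rw [List.forall_mem_cons] at hl
    obtain ⟨hw, hl⟩ := hl
    rw [List.flatten_cons, List.reverse_append, List.map_append, List.prod_append, ih hl,
      List.count_append, List.count_append]
    have hpair (c : Fin 2) : ([c, c].reverse.map f).prod = f c ^ 2 := by simp [sq]
    have hsucc (k : ℕ) : (2 + k) / 2 = k / 2 + 1 := by omega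
    rcases hw with rfl | rfl
    · rw [hpair, show count 0 [(0 : Fin 2), 0] = 2 from rfl,
        show count 1 [(0 : Fin 2), 0] = 0 from rfl, zero_add, hsucc, pow_succ (f 0 ^ 2),
        (hf.pow_right _).symm.right_comm]
    · rw [hpair, show count 0 [(1 : Fin 2), 1] = 0 from rfl,
        show count 1 [(1 : Fin 2), 1] = 2 from rfl, zero_add, hsucc, pow_succ (f 1 ^ 2),
        mul_assoc]

/-- no 2-state MCQFA with real (orthogonal) matrices can separate
(even nondeterministically) two words built from the blocks `aa` and `bb` that have
the same number of `a`s and the same number of `b`s.  Here the alphabet `{a, b}` is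
`Fin 2` with `a = 0` and `b = 1`. -/
theorem stmt4 (Ua Ub : Matrix (Fin 2) (Fin 2) ℝ)
    (hUa : Uaᵀ * Ua = 1) (hUb : Ubᵀ * Ub = 1)
    (u₀ : Fin 2 → ℝ) (x y : List (Fin 2))
    (hx : ∃ l : List (List (Fin 2)), (∀ w ∈ l, w = [0, 0] ∨ w = [1, 1]) ∧ x = l.flatten)
    (hy : ∃ l : List (List (Fin 2)), (∀ w ∈ l, w = [0, 0] ∨ w = [1, 1]) ∧ y = l.flatten)
    (ha : x.count 0 = y.count 0) (hb : x.count 1 = y.count 1) :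
    x.foldl (fun v c => ((![Ua, Ub]) c).mulVec v) u₀ =
      y.foldl (fun v c => ((![Ua, Ub]) c).mulVec v) u₀ ∧
    ∀ S : Finset (Fin 2),
      ∑ j ∈ S, ((x.foldl (fun v c => ((![Ua, Ub]) c).mulVec v) u₀) j) ^ 2 =
      ∑ j ∈ S, ((y.foldl (fun v c => ((![Ua, Ub]) c).mulVec v) u₀) j) ^ 2 := by
  obtain ⟨lx, hlx, rfl⟩ := hx
  obtain ⟨ly, hly, rfl⟩ := hy
  have hcomm : Commute (![Ua, Ub] 0 ^ 2) (![Ua, Ub] 1 ^ 2) := by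
    simp only [sq, cons_val_zero, cons_val_one]
    exact commute_of_mem_specialOrthogonalGroup_fin_two
      (mul_self_mem_specialOrthogonalGroup hUa) (mul_self_mem_specialOrthogonalGroup hUb)
  have hfinal : lx.flatten.foldl (fun v c => ((![Ua, Ub]) c).mulVec v) u₀ =
      ly.flatten.foldl (fun v c => ((![Ua, Ub]) c).mulVec v) u₀ := by
    rw [foldl_mulVec, foldl_mulVec,
      List.prod_map_reverse_flatten_of_forall_eq_pair _ hcomm lx hlx,
      List.prod_map_reverse_flatten_of_forall_eq_pair _ hcomm ly hly, ha, hb]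
  exact ⟨hfinal, fun S => by rw [hfinal]⟩
end

section
/- Let x and y be any two distinct words over the alphabet {a, b}. Then there exist unitary matrices U_a, U_b ∈ U(2, ℂ), a unit vector u₀ ∈ ℂ², and a set S ⊆ {1, 2} of accepting coordinates such that the acceptance probability of y is 0 and the acceptance probability of x is strictly positive; that is, any pair of distinct words can be separated by a 2-state nondeterministic MCQFA. -/
open Matrix

/-
Let `G_a = diag(3 + 4i, 3 - 4i)` and `G_b = [[3, 4i], [4i, 3]]`, so that `U_c = G_c / 5` is
unitary. Reducing modulo the Gaussian prime `2 - i` (that is, `i ↦ 2` in `ZMod 5`) turns each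
`G_c` into a rank-one matrix `t_c r_c r_cᵀ` with `r_a ⬝ r_b ≠ 0`, so the reduction of the product
of a nonempty word is a nonzero rank-one matrix whose row is `r` of its first letter. Hence the
products of two words with different first letters (or of an empty and a nonempty word) have a
nonvanishing `2 × 2` minor and are not proportional; cancelling a common prefix, `U_x` is never a
scalar multiple of `U_y` when `x ≠ y`.

Then `M = U_y⁻¹ U_x` is not scalar, so some unit vector `u` is not an eigenvector of `M`.
Conjugating the automaton by a unitary `V` that sends `U_y u` to the second basis vector, and
starting it at `V u`, the first coordinate accepts `x` with positive probability and `y` never.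
-/

namespace MCQFA

section WordMatrix

variable {α R n : Type*} [Fintype n] [DecidableEq n] [Semiring R] {A : α → Matrix n n R}

def wordMatrix (A : α → Matrix n n R) (w : List α) : Matrix n n R :=
  (w.reverse.map A).prod

@[simp]
lemma wordMatrix_nil : wordMatrix A [] = 1 := rfl

lemma wordMatrix_cons (c : α) (w : List α) :
    wordMatrix A (c :: w) = wordMatrix A w * A c := by
  simp [wordMatrix]

lemma foldl_mulVec_eq_wordMatrix_mulVec (w : List α) (u : n → R) :
    w.foldl (fun v c => (A c).mulVec v) u = wordMatrix A w *ᵥ u := by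
  induction w generalizing u with
  | nil => simp
  | cons c w ih => rw [List.foldl_cons, ih, wordMatrix_cons, mulVec_mulVec]

lemma wordMatrix_smul {S : Type*} [CommSemiring S] (B : α → Matrix n n S) (r : S) (w : List α) :
    wordMatrix (fun c => r • B c) w = r ^ w.length • wordMatrix B w := by
  induction w with
  | nil => simp
  | cons c w ih =>
    rw [wordMatrix_cons, wordMatrix_cons, ih, smul_mul_smul_comm, List.length_cons, pow_succ]

lemma map_wordMatrix {S : Type*} [Semiring S] (f : R →+* S) (w : List α) :
    f.mapMatrix (wordMatrix A w) = wordMatrix (fun c => f.mapMatrix (A c)) w := by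
  simp [wordMatrix, map_list_prod, List.map_map, Function.comp_def]

lemma wordMatrix_mem {S : Submonoid (Matrix n n R)} (hA : ∀ c, A c ∈ S) (w : List α) :
    wordMatrix A w ∈ S :=
  S.list_prod_mem (by simp [hA])

lemma wordMatrix_conj_mul {V W : Matrix n n R} (hWV : W * V = 1) (w : List α) :
    wordMatrix (fun c => V * A c * W) w * V = V * wordMatrix A w := by
  induction w with
  | nil => simp
  | cons c w ih =>
    rw [wordMatrix_cons, wordMatrix_cons, mul_assoc, mul_assoc, hWV, mul_one, ← mul_assoc, ih,
      mul_assoc]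

end WordMatrix

lemma ofReal_sum_norm_sq {n : Type*} [Fintype n] (v : n → ℂ) :
    ((∑ j, ‖v j‖ ^ 2 : ℝ) : ℂ) = star v ⬝ᵥ v := by
  simp [dotProduct, Complex.sq_norm, Complex.normSq_eq_conj_mul_self]

lemma sum_norm_sq_mulVec {n : Type*} [Fintype n] [DecidableEq n] {V : Matrix n n ℂ}
    (hV : V ∈ unitaryGroup n ℂ) (v : n → ℂ) :
    ∑ j, ‖(V *ᵥ v) j‖ ^ 2 = ∑ j, ‖v j‖ ^ 2 := by
  apply Complex.ofReal_injective
  rw [ofReal_sum_norm_sq, ofReal_sum_norm_sq, star_mulVec, ← dotProduct_mulVec, mulVec_mulVec,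
    ← star_eq_conjTranspose, mem_unitaryGroup_iff'.mp hV, one_mulVec]

def wedge {R : Type*} [CommRing R] (p q : Fin 2 → R) : R := p 0 * q 1 - p 1 * q 0

def orthoFrame (p : Fin 2 → ℂ) : Matrix (Fin 2) (Fin 2) ℂ :=
  !![-p 1, p 0; star (p 0), star (p 1)]

lemma orthoFrame_mulVec_zero (p q : Fin 2 → ℂ) : (orthoFrame p *ᵥ q) 0 = wedge p q := by
  simp [orthoFrame, wedge, mulVec, dotProduct, Fin.sum_univ_two, neg_add_eq_sub, mul_comm]

lemma orthoFrame_mem_unitaryGroup {p : Fin 2 → ℂ} (hp : ∑ j, ‖p j‖ ^ 2 = 1) :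
    orthoFrame p ∈ unitaryGroup (Fin 2) ℂ := by
  have h : starRingEnd ℂ (p 0) * p 0 + starRingEnd ℂ (p 1) * p 1 = 1 := by
    simpa [dotProduct, Fin.sum_univ_two, hp] using (ofReal_sum_norm_sq p).symm
  rw [mem_unitaryGroup_iff]
  ext i j
  fin_cases i <;> fin_cases j <;> simp [orthoFrame, mul_apply, Fin.sum_univ_two]
  · linear_combination h
  · ring
  · ring
  · linear_combination h

lemma wedge_ne_zero_of_linearIndependent {K : Type*} [Field K] {p q : Fin 2 → K}
    (h : LinearIndependent K ![p, q]) : wedge p q ≠ 0 := by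
  have := (linearIndependent_rows_iff_isUnit (A := Matrix.of ![p, q])).mp h
  rwa [isUnit_iff_isUnit_det, isUnit_iff_ne_zero, det_fin_two] at this

lemma exists_normalized_wedge_mulVec_ne_zero {M : Matrix (Fin 2) (Fin 2) ℂ}
    (hM : ∀ a : ℂ, M ≠ a • 1) :
    ∃ u : Fin 2 → ℂ, ∑ j, ‖u j‖ ^ 2 = 1 ∧ wedge u (M *ᵥ u) ≠ 0 := by
  obtain ⟨v, hv⟩ : ∃ v, LinearIndependent ℂ ![v, M *ᵥ v] := by
    by_contra! h
    obtain ⟨a, ha⟩ := (toLin' M).exists_eq_smul_id_of_forall_notLinearIndependent h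
    exact hM a (by simpa using congrArg LinearMap.toMatrix' ha)
  set x : EuclideanSpace ℂ (Fin 2) := WithLp.toLp 2 v
  have hx : x ≠ 0 := by simpa [x] using hv.ne_zero 0
  obtain ⟨c, hc, hcx⟩ : ∃ c : ℂ, c ≠ 0 ∧ ‖c • x‖ = 1 :=
    ⟨_, by simpa using hx, norm_smul_inv_norm hx⟩
  refine ⟨c • v, ?_, ?_⟩
  · have hnorm : ‖c • x‖ ^ 2 = ∑ j, ‖(c • v) j‖ ^ 2 := by
      rw [EuclideanSpace.norm_sq_eq]; rfl
    rw [← hnorm, hcx, one_pow]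
  · have hwedge : wedge (c • v) (M *ᵥ (c • v)) = c ^ 2 * wedge v (M *ᵥ v) := by
      simp only [wedge, mulVec_smul, Pi.smul_apply, smul_eq_mul]
      ring
    rw [hwedge]
    exact mul_ne_zero (pow_ne_zero 2 hc) (wedge_ne_zero_of_linearIndependent hv)

noncomputable def acceptProb {α n : Type*} [Fintype n] (U : α → Matrix n n ℂ) (u₀ : n → ℂ)
    (S : Finset n) (w : List α) : ℝ :=
  ∑ j ∈ S, ‖(w.foldl (fun v c => (U c).mulVec v) u₀) j‖ ^ 2

theorem exists_separating_of_forall_ne_smul {α : Type*} {U : α → Matrix (Fin 2) (Fin 2) ℂ}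
    (hU : ∀ c, U c ∈ unitaryGroup (Fin 2) ℂ) {x y : List α}
    (hxy : ∀ a : ℂ, wordMatrix U x ≠ a • wordMatrix U y) :
    ∃ (U' : α → Matrix (Fin 2) (Fin 2) ℂ) (u₀ : Fin 2 → ℂ) (S : Finset (Fin 2)),
      (∀ c, U' c ∈ unitaryGroup (Fin 2) ℂ) ∧ ∑ j, ‖u₀ j‖ ^ 2 = 1 ∧
      acceptProb U' u₀ S y = 0 ∧ 0 < acceptProb U' u₀ S x := by
  have hWy : wordMatrix U y ∈ unitaryGroup (Fin 2) ℂ := wordMatrix_mem hU y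
  set M := star (wordMatrix U y) * wordMatrix U x
  have hM : ∀ a : ℂ, M ≠ a • 1 := by
    intro a ha
    apply hxy a
    calc wordMatrix U x = wordMatrix U y * M := by
          rw [← mul_assoc, mem_unitaryGroup_iff.mp hWy, one_mul]
      _ = a • wordMatrix U y := by rw [ha, mul_smul_comm, mul_one]
  obtain ⟨u, hu, hwedge⟩ := exists_normalized_wedge_mulVec_ne_zero hM
  set V := orthoFrame u * star (wordMatrix U y)
  have hV : V ∈ unitaryGroup (Fin 2) ℂ :=
    mul_mem (orthoFrame_mem_unitaryGroup hu) (Unitary.star_mem hWy)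
  have hfinal (w : List α) :
      w.foldl (fun v c => (V * U c * star V) *ᵥ v) (V *ᵥ u) = (V * wordMatrix U w) *ᵥ u := by
    rw [foldl_mulVec_eq_wordMatrix_mulVec, mulVec_mulVec,
      wordMatrix_conj_mul (mem_unitaryGroup_iff'.mp hV)]
  refine ⟨fun c => V * U c * star V, V *ᵥ u, {0},
    fun c => mul_mem (mul_mem hV (hU c)) (Unitary.star_mem hV),
    by rw [sum_norm_sq_mulVec hV, hu], ?_, ?_⟩
  · have hVy : V * wordMatrix U y = orthoFrame u := by
      rw [mul_assoc, mem_unitaryGroup_iff'.mp hWy, mul_one]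
    rw [acceptProb, Finset.sum_singleton, hfinal, hVy, orthoFrame_mulVec_zero]
    simp [wedge, mul_comm]
  · have hVx : V * wordMatrix U x = orthoFrame u * M := mul_assoc _ _ _
    rw [acceptProb, Finset.sum_singleton, hfinal, hVx, ← mulVec_mulVec, orthoFrame_mulVec_zero]
    positivity

lemma minors_eq_of_smul_eq_smul {K m n : Type*} [CommRing K] [IsDomain K] {X Y : Matrix m n K}
    {r s : K} (hr : r ≠ 0) (h : r • X = s • Y) (i : m) (j : n) (k : m) (l : n) :
    X i j * Y k l = X k l * Y i j := by
  have hij := congrFun (congrFun h i) j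
  have hkl := congrFun (congrFun h k) l
  simp only [Matrix.smul_apply, smul_eq_mul] at hij hkl
  apply mul_left_cancel₀ hr
  linear_combination Y k l * hij - Y i j * hkl

section Gaussian

open GaussianInt

def gaussGen : Fin 2 → Matrix (Fin 2) (Fin 2) GaussianInt :=
  ![!![⟨3, 4⟩, 0; 0, ⟨3, -4⟩], !![3, ⟨0, 4⟩; ⟨0, 4⟩, 3]]

noncomputable def gaussUnitary (c : Fin 2) : Matrix (Fin 2) (Fin 2) ℂ :=
  (5 : ℂ)⁻¹ • toComplex.mapMatrix (gaussGen c)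

lemma gaussUnitary_mem_unitaryGroup (c : Fin 2) : gaussUnitary c ∈ unitaryGroup (Fin 2) ℂ := by
  rw [mem_unitaryGroup_iff]
  ext i j
  fin_cases c <;> fin_cases i <;> fin_cases j <;>
    norm_num [gaussUnitary, gaussGen, mul_apply, Fin.sum_univ_two, toComplex_def', Complex.ext_iff,
      map_ofNat]

def toZMod5 : GaussianInt →+* ZMod 5 := Zsqrtd.lift ⟨2, by decide⟩

instance : Fact (Nat.Prime 5) := ⟨Nat.prime_five⟩

def rowVec : Fin 2 → Fin 2 → ZMod 5 := ![![1, 0], ![1, 1]]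

lemma toZMod5_mk (a b : ℤ) : toZMod5 ⟨a, b⟩ = a + b * 2 := by
  simp [toZMod5, Zsqrtd.lift]

lemma toZMod5_gaussGen (c : Fin 2) :
    ∃ t : ZMod 5, t ≠ 0 ∧
      toZMod5.mapMatrix (gaussGen c) = t • vecMulVec (rowVec c) (rowVec c) := by
  refine ⟨![1, 3] c, by fin_cases c <;> decide, ?_⟩
  ext i j
  fin_cases c <;> fin_cases i <;> fin_cases j <;> norm_num [gaussGen, rowVec, toZMod5_mk] <;> decide

lemma toZMod5_wordMatrix_cons (c : Fin 2) (w : List (Fin 2)) :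
    ∃ s : ZMod 5, s ≠ 0 ∧ ∃ e, toZMod5.mapMatrix (wordMatrix gaussGen (c :: w)) =
      s • vecMulVec (rowVec e) (rowVec c) := by
  induction w generalizing c with
  | nil =>
    obtain ⟨t, ht, hgen⟩ := toZMod5_gaussGen c
    exact ⟨t, ht, c, by rw [wordMatrix_cons, wordMatrix_nil, one_mul, hgen]⟩
  | cons d w ih =>
    obtain ⟨s, hs, e, hP⟩ := ih d
    obtain ⟨t, ht, hgen⟩ := toZMod5_gaussGen c
    have hdc : rowVec d ⬝ᵥ rowVec c ≠ 0 := by fin_cases d <;> fin_cases c <;> decide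
    refine ⟨s * t * (rowVec d ⬝ᵥ rowVec c), mul_ne_zero (mul_ne_zero hs ht) hdc, e, ?_⟩
    rw [wordMatrix_cons, _root_.map_mul, hP, hgen, smul_mul_smul_comm, vecMulVec_mul_vecMulVec,
      vecMulVec_smul, smul_smul]

lemma toZMod5_wordMatrix_cons_apply (c : Fin 2) (w : List (Fin 2)) :
    ∃ s : ZMod 5, s ≠ 0 ∧ ∃ e, ∀ i j,
      toZMod5 (wordMatrix gaussGen (c :: w) i j) = s * (rowVec e i * rowVec c j) := by
  obtain ⟨s, hs, e, hP⟩ := toZMod5_wordMatrix_cons c w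
  exact ⟨s, hs, e, fun i j => by simpa [vecMulVec_apply] using congrFun (congrFun hP i) j⟩

lemma not_minors_eq_nil_cons (d : Fin 2) (y : List (Fin 2)) :
    ¬ ∀ i j k l, wordMatrix gaussGen [] i j * wordMatrix gaussGen (d :: y) k l =
      wordMatrix gaussGen [] k l * wordMatrix gaussGen (d :: y) i j := by
  intro hm
  obtain ⟨s, hs, e, hY⟩ := toZMod5_wordMatrix_cons_apply d y
  have h1 := congrArg toZMod5 (hm 0 0 0 1)
  have h2 := congrArg toZMod5 (hm 0 0 1 1)
  simp only [map_mul, hY, wordMatrix_nil, one_apply] at h1 h2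
  fin_cases d <;> fin_cases e <;> simp [rowVec, hs, hs.symm] at h1 h2

lemma not_minors_eq_of_head?_ne {x y : List (Fin 2)} (h : x.head? ≠ y.head?) :
    ¬ ∀ i j k l, wordMatrix gaussGen x i j * wordMatrix gaussGen y k l =
      wordMatrix gaussGen x k l * wordMatrix gaussGen y i j := by
  intro hm
  rcases x with _ | ⟨c, x⟩ <;> rcases y with _ | ⟨d, y⟩
  · exact h rfl
  · exact not_minors_eq_nil_cons d y hm
  · exact not_minors_eq_nil_cons c x fun i j k l => by rw [mul_comm, hm k l i j, mul_comm]
  · obtain ⟨s, hs, e, hX⟩ := toZMod5_wordMatrix_cons_apply c x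
    obtain ⟨s', hs', e', hY⟩ := toZMod5_wordMatrix_cons_apply d y
    have h1 := congrArg toZMod5 (hm 0 0 0 1)
    simp only [map_mul, hX, hY] at h1
    fin_cases c <;> fin_cases d <;> fin_cases e <;> fin_cases e' <;> simp_all [rowVec]

lemma wordMatrix_gaussUnitary (w : List (Fin 2)) :
    wordMatrix gaussUnitary w =
      (5 : ℂ)⁻¹ ^ w.length • toComplex.mapMatrix (wordMatrix gaussGen w) := by
  rw [map_wordMatrix]
  exact wordMatrix_smul _ _ w

lemma minors_eq_of_wordMatrix_gaussUnitary_eq_smul {x y : List (Fin 2)} {a : ℂ}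
    (h : wordMatrix gaussUnitary x = a • wordMatrix gaussUnitary y) (i j k l : Fin 2) :
    wordMatrix gaussGen x i j * wordMatrix gaussGen y k l =
      wordMatrix gaussGen x k l * wordMatrix gaussGen y i j := by
  rw [wordMatrix_gaussUnitary, wordMatrix_gaussUnitary, smul_smul] at h
  apply toComplex_injective
  simpa using minors_eq_of_smul_eq_smul (by simp) h i j k l

theorem wordMatrix_gaussUnitary_ne_smul {x y : List (Fin 2)} (hxy : x ≠ y) (a : ℂ) :
    wordMatrix gaussUnitary x ≠ a • wordMatrix gaussUnitary y := by
  have of_head?_ne {x y : List (Fin 2)} (h : x.head? ≠ y.head?) :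
      wordMatrix gaussUnitary x ≠ a • wordMatrix gaussUnitary y := fun hxy =>
    not_minors_eq_of_head?_ne h (minors_eq_of_wordMatrix_gaussUnitary_eq_smul hxy)
  induction x generalizing y with
  | nil => exact of_head?_ne (by cases y <;> simp_all)
  | cons c x ih =>
    rcases y with _ | ⟨d, y⟩
    · exact of_head?_ne (by simp)
    obtain rfl | hcd := eq_or_ne c d
    · intro h
      apply ih (by simpa using hxy)
      have hc := mem_unitaryGroup_iff.mp (gaussUnitary_mem_unitaryGroup c)
      simpa [wordMatrix_cons, mul_assoc, smul_mul_assoc, hc] using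
        congrArg (· * star (gaussUnitary c)) h
    · exact of_head?_ne (by simpa using hcd)

end Gaussian

end MCQFA

/-- any pair of distinct words over `{a, b}` (here `Fin 2`) can be
separated by a 2-state nondeterministic MCQFA: `y` is accepted with probability `0`
and `x` with strictly positive probability. -/
theorem stmt6 (x y : List (Fin 2)) (hxy : x ≠ y) :
    ∃ (U : Fin 2 → Matrix (Fin 2) (Fin 2) ℂ) (u₀ : Fin 2 → ℂ) (S : Finset (Fin 2)),
      (∀ τ, U τ ∈ Matrix.unitaryGroup (Fin 2) ℂ) ∧
      (∑ j, ‖u₀ j‖ ^ 2 = 1) ∧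
      (∑ j ∈ S, ‖(y.foldl (fun v c => (U c).mulVec v) u₀) j‖ ^ 2 = 0) ∧
      (0 < ∑ j ∈ S, ‖(x.foldl (fun v c => (U c).mulVec v) u₀) j‖ ^ 2) :=
  MCQFA.exists_separating_of_forall_ne_smul MCQFA.gaussUnitary_mem_unitaryGroup
    (MCQFA.wordMatrix_gaussUnitary_ne_smul hxy)
end

section
/- For any two distinct words x, y over {a, b}, the element g_x · g_y⁻¹ of the free group F₂ lies outside the second derived subgroup F₂^{(2)} = [[F₂, F₂], [F₂, F₂]]. -/
/-!
A homomorphism kills `F₂⁽²⁾` as soon as its target is metabelian, so it suffices to find a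
metabelian group in which the images of distinct positive words are distinct. The affine group
of `ℚ` is metabelian, and `a ↦ (x ↦ 2x)`, `b ↦ (x ↦ 2x + 1)` sends a positive word `w` to
`x ↦ 2^|w| x + n_w`, where `n_w` is the number with binary digits `w` (least significant first);
the pair `(|w|, n_w)` determines `w`.
-/

open SemidirectProduct Multiplicative

theorem derivedSeries_two_eq_bot_of_ker_commute {G H : Type*} [Group G] [CommGroup H]
    (f : G →* H) (hf : ∀ x ∈ f.ker, ∀ y ∈ f.ker, Commute x y) : derivedSeries G 2 = ⊥ := by
  have hD : derivedSeries G 1 ≤ f.ker := by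
    rw [derivedSeries_one]
    exact Abelianization.commutator_subset_ker f
  rw [derivedSeries_succ, eq_bot_iff, Subgroup.commutator_le]
  intro x hx y hy
  rw [Subgroup.mem_bot, commutatorElement_eq_one_iff_commute]
  exact hf x (hD hx) y (hD hy)

theorem SemidirectProduct.derivedSeries_two_eq_bot {N K : Type*} [CommGroup N] [CommGroup K]
    (φ : K →* MulAut N) : derivedSeries (N ⋊[φ] K) 2 = ⊥ :=
  derivedSeries_two_eq_bot_of_ker_commute rightHom <| by
    rw [← range_inl_eq_ker_rightHom]
    rintro _ ⟨a, rfl⟩ _ ⟨b, rfl⟩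
    exact (Commute.all a b).map inl

theorem FreeGroup.lift_prod_map_of {α G : Type*} [Group G] (f : α → G) (w : List α) :
    FreeGroup.lift f (w.map FreeGroup.of).prod = (w.map f).prod := by
  simp [map_list_prod, Function.comp_def]

noncomputable def ratScaling : ℚˣ →* MulAut (Multiplicative ℚ) :=
  (MulAutMultiplicative ℚ).symm.toMonoidHom.comp (DistribMulAction.toAddAut ℚˣ ℚ)

theorem ratScaling_apply (u : ℚˣ) (c : Multiplicative ℚ) : ratScaling u c = ofAdd (u * toAdd c) :=
  rfl

/-- `⟨ofAdd c, u⟩` is the affine map `x ↦ u x + c`. -/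
abbrev RatAffine := Multiplicative ℚ ⋊[ratScaling] ℚˣ

noncomputable def binaryAffine (i : Fin 2) : RatAffine := ⟨ofAdd (i : ℚ), Units.mk0 2 two_ne_zero⟩

theorem prod_map_binaryAffine_right (w : List (Fin 2)) :
    (w.map binaryAffine).prod.right = Units.mk0 2 two_ne_zero ^ w.length := by
  induction w with
  | nil => simp
  | cons i w ih =>
    rw [List.map_cons, List.prod_cons, mul_right, ih, List.length_cons, pow_succ']
    rfl

theorem prod_map_binaryAffine_left (w : List (Fin 2)) :
    toAdd (w.map binaryAffine).prod.left = (Nat.ofDigits 2 (w.map Fin.val) : ℕ) := by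
  induction w with
  | nil => simp
  | cons i w ih =>
    rw [List.map_cons, List.prod_cons, mul_left, toAdd_mul, ratScaling_apply, ih, List.map_cons,
      Nat.ofDigits_cons]
    simp [binaryAffine]

theorem prod_map_binaryAffine_injective :
    Function.Injective fun w : List (Fin 2) => (w.map binaryAffine).prod := by
  intro x y h
  have hlen : x.length = y.length := by
    have := congrArg (fun g : RatAffine => (g.right : ℚ)) h
    simp only [prod_map_binaryAffine_right, Units.val_pow_eq_pow_val, Units.val_mk0] at this
    exact pow_right_injective₀ two_pos (by norm_num) this
  have hdigits : Nat.ofDigits 2 (x.map Fin.val) = Nat.ofDigits 2 (y.map Fin.val) := by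
    have := congrArg (fun g : RatAffine => toAdd g.left) h
    simp only [prod_map_binaryAffine_left] at this
    exact_mod_cast this
  have digit_lt (w : List (Fin 2)) : ∀ d ∈ w.map Fin.val, d < 2 := by
    simp only [List.mem_map]
    rintro _ ⟨i, -, rfl⟩
    exact i.isLt
  exact List.map_injective_iff.2 Fin.val_injective <|
    Nat.ofDigits_inj_of_len_eq one_lt_two (by simpa) (digit_lt x) (digit_lt y) hdigits

/-- for distinct words `x, y` over `{a, b}` (here `Fin 2`), the element
`g_x g_y⁻¹` of the free group `F₂` lies outside the second derived subgroup `F₂⁽²⁾`. -/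
theorem stmt8 (x y : List (Fin 2)) (hxy : x ≠ y) :
    (x.map FreeGroup.of).prod * ((y.map FreeGroup.of).prod)⁻¹ ∉
      derivedSeries (FreeGroup (Fin 2)) 2 := by
  intro hmem
  have h := map_derivedSeries_le_derivedSeries (FreeGroup.lift binaryAffine) 2 ⟨_, hmem, rfl⟩
  rw [SemidirectProduct.derivedSeries_two_eq_bot, Subgroup.mem_bot, map_mul, map_inv,
    mul_inv_eq_one, FreeGroup.lift_prod_map_of, FreeGroup.lift_prod_map_of] at h
  exact hxy (prod_map_binaryAffine_injective h)
end

section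
/- Let U_a = (1/5)·[[4, 3, 0], [−3, 4, 0], [0, 0, 5]] and U_b = (1/5)·[[4, 0, 3], [0, 5, 0], [−3, 0, 4]], two rotation matrices in SO(3). The group homomorphism φ : F₂ → GL₃(ℝ) determined by a ↦ U_a and b ↦ U_b is injective; equivalently, for every nonidentity element ω of the free group F₂, the matrix φ(ω) is not the identity matrix, so U_a and U_b generate a free subgroup of SO(3) of rank 2. -/
open Matrix

/-! Scaling by 5 turns every letter of `F₂` into an integer matrix `N_l`. Modulo 5 each `N_l`
has rank one, `N_l ≡ u_l r_lᵀ`, and `r_l ⬝ u_l' ≢ 0` unless `l'` is the inverse of `l`.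
Along a nonempty reduced word the product of the `N_l` is therefore `c • u r_lastᵀ` with
`c ≢ 0`, in particular nonzero mod 5. If `φ ω = 1` for a word of length `n`, that product
would be `5ⁿ • 1 ≡ 0`. -/

namespace Matrix

variable {ι n K : Type*} [Fintype n] [DecidableEq n] [CommRing K] [IsDomain K]
  (u r : ι → n → K)

theorem exists_list_prod_map_vecMulVec_eq {i : ι} {L : List ι}
    (h : (i :: L).IsChain fun i j => r i ⬝ᵥ u j ≠ 0) :
    ∃ c : K, c ≠ 0 ∧ ∃ j,
      ((i :: L).map fun k => vecMulVec (u k) (r k)).prod = vecMulVec (u i) (c • r j) := by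
  induction L generalizing i with
  | nil => exact ⟨1, one_ne_zero, i, by simp⟩
  | cons i' L ih =>
    obtain ⟨hii', hL⟩ := List.isChain_cons_cons.mp h
    obtain ⟨c, hc, j, hprod⟩ := ih hL
    refine ⟨r i ⬝ᵥ u i' * c, mul_ne_zero hii' hc, j, ?_⟩
    rw [List.map_cons, List.prod_cons, hprod, vecMulVec_mul_vecMulVec, smul_smul]

theorem list_prod_map_vecMulVec_ne_zero (hu : ∀ i, u i ≠ 0) (hr : ∀ i, r i ≠ 0)
    {L : List ι} (hL : L ≠ []) (h : L.IsChain fun i j => r i ⬝ᵥ u j ≠ 0) :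
    (L.map fun k => vecMulVec (u k) (r k)).prod ≠ 0 := by
  obtain ⟨i, L, rfl⟩ := List.exists_cons_of_ne_nil hL
  obtain ⟨c, hc, j, hprod⟩ := exists_list_prod_map_vecMulVec_eq u r h
  rw [hprod]
  exact vecMulVec_ne_zero (hu i) (smul_ne_zero hc (hr j))

end Matrix

namespace FreeRotation

def scaledRotation : Fin 2 × Bool → Matrix (Fin 3) (Fin 3) ℤ
  | (0, true) => !![4, 3, 0; -3, 4, 0; 0, 0, 5]
  | (0, false) => !![4, -3, 0; 3, 4, 0; 0, 0, 5]
  | (1, true) => !![4, 0, 3; 0, 5, 0; -3, 0, 4]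
  | (1, false) => !![4, 0, -3; 0, 5, 0; 3, 0, 4]

def colModFive : Fin 2 × Bool → Fin 3 → ZMod 5
  | (0, true) => ![4, 2, 0]
  | (0, false) => ![4, 3, 0]
  | (1, true) => ![4, 0, 2]
  | (1, false) => ![4, 0, 3]

def rowModFive : Fin 2 × Bool → Fin 3 → ZMod 5
  | (0, true) => ![1, 2, 0]
  | (0, false) => ![1, 3, 0]
  | (1, true) => ![1, 0, 2]
  | (1, false) => ![1, 0, 3]

theorem scaledRotation_map_intCast (l : Fin 2 × Bool) :
    (scaledRotation l).map (Int.cast : ℤ → ZMod 5) =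
      vecMulVec (colModFive l) (rowModFive l) := by
  revert l; decide

theorem colModFive_ne_zero (l : Fin 2 × Bool) : colModFive l ≠ 0 := by
  revert l; decide

theorem rowModFive_ne_zero (l : Fin 2 × Bool) : rowModFive l ≠ 0 := by
  revert l; decide

theorem rowModFive_dotProduct_colModFive_ne_zero {a b : Fin 2 × Bool}
    (h : a.1 = b.1 → a.2 = b.2) : rowModFive a ⬝ᵥ colModFive b ≠ 0 := by
  revert a b; decide

theorem prod_scaledRotation_ne_five_pow {L : List (Fin 2 × Bool)} (hL : FreeGroup.IsReduced L)
    (hne : L ≠ []) : (L.map scaledRotation).prod ≠ 5 ^ L.length := by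
  have hfive : (5 : Matrix (Fin 3) (Fin 3) (ZMod 5)) = 0 := by decide
  have : Fact (Nat.Prime 5) := ⟨Nat.prime_five⟩
  intro h
  have hmod := congrArg (Int.castRingHom (ZMod 5)).mapMatrix h
  rw [map_list_prod, map_pow, map_ofNat, hfive, zero_pow (List.length_eq_zero_iff.not.mpr hne),
    List.map_map] at hmod
  refine list_prod_map_vecMulVec_ne_zero colModFive rowModFive colModFive_ne_zero
    rowModFive_ne_zero hne (hL.imp fun _ _ => rowModFive_dotProduct_colModFive_ne_zero) ?_
  simpa [Function.comp_def, RingHom.mapMatrix_apply, scaledRotation_map_intCast] using hmod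

section

variable (f : Fin 2 → GL (Fin 3) ℝ)
    (hfa : (f 0 : Matrix (Fin 3) (Fin 3) ℝ) = (5 : ℝ)⁻¹ • !![4, 3, 0; -3, 4, 0; 0, 0, 5])
    (hfb : (f 1 : Matrix (Fin 3) (Fin 3) ℝ) = (5 : ℝ)⁻¹ • !![4, 0, 3; 0, 5, 0; -3, 0, 4])
include hfa hfb

theorem coe_generator (i : Fin 2) :
    (f i : Matrix (Fin 3) (Fin 3) ℝ) =
      (5 : ℝ)⁻¹ • (Int.castRingHom ℝ).mapMatrix (scaledRotation (i, true)) := by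
  match i with
  | 0 => rw [hfa]; congr 1; ext j k; fin_cases j <;> fin_cases k <;> simp [scaledRotation]
  | 1 => rw [hfb]; congr 1; ext j k; fin_cases j <;> fin_cases k <;> simp [scaledRotation]

theorem coe_generator_inv (i : Fin 2) :
    (↑(f i)⁻¹ : Matrix (Fin 3) (Fin 3) ℝ) =
      (5 : ℝ)⁻¹ • (Int.castRingHom ℝ).mapMatrix (scaledRotation (i, false)) := by
  apply Units.inv_eq_of_mul_eq_one_right
  have h25 : scaledRotation (i, true) * scaledRotation (i, false) = 25 := by revert i; decide
  rw [coe_generator f hfa hfb, smul_mul_smul, ← map_mul, h25, map_ofNat, ← diagonal_ofNat,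
    ← smul_one_eq_diagonal, smul_smul]
  norm_num

theorem five_smul_coe_letter (l : Fin 2 × Bool) :
    (5 : ℝ) • (↑(cond l.2 (f l.1) (f l.1)⁻¹) : Matrix (Fin 3) (Fin 3) ℝ) =
      (Int.castRingHom ℝ).mapMatrix (scaledRotation l) := by
  obtain ⟨i, _ | _⟩ := l <;>
    simp [coe_generator f hfa hfb, coe_generator_inv f hfa hfb, smul_smul]

theorem five_pow_smul_coe_lift_mk (L : List (Fin 2 × Bool)) :
    (5 : ℝ) ^ L.length • (FreeGroup.lift f (FreeGroup.mk L) : Matrix (Fin 3) (Fin 3) ℝ) =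
      (Int.castRingHom ℝ).mapMatrix (L.map scaledRotation).prod := by
  rw [FreeGroup.lift_mk, ← Units.coeHom_apply, map_list_prod, map_list_prod, List.map_map,
    List.map_map]
  rw [← List.length_map (f := Units.coeHom (Matrix (Fin 3) (Fin 3) ℝ) ∘ _), List.smul_prod]
  simp only [List.map_map, Function.comp_def, Units.coeHom_apply, five_smul_coe_letter f hfa hfb]

theorem coe_lift_ne_one {ω : FreeGroup (Fin 2)} (hω : ω ≠ 1) :
    (FreeGroup.lift f ω : Matrix (Fin 3) (Fin 3) ℝ) ≠ 1 := by
  intro h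
  have hprod := five_pow_smul_coe_lift_mk f hfa hfb ω.toWord
  rw [FreeGroup.mk_toWord, h, Algebra.smul_def, mul_one, map_pow, map_ofNat,
    ← map_ofNat (Int.castRingHom ℝ).mapMatrix 5, ← map_pow] at hprod
  exact prod_scaledRotation_ne_five_pow FreeGroup.isReduced_toWord
    (mt FreeGroup.toWord_eq_nil_iff.mp hω) (Matrix.map_injective Int.cast_injective hprod.symm)

end

end FreeRotation

open FreeRotation in
/-- the rotations `U_a = (1/5)[[4,3,0],[-3,4,0],[0,0,5]]` and
`U_b = (1/5)[[4,0,3],[0,5,0],[-3,0,4]]` generate a free subgroup of `SO(3)` of rank 2: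
the homomorphism from `F₂` sending the generators to `U_a` and `U_b` is injective. -/
theorem stmt9 (f : Fin 2 → GL (Fin 3) ℝ)
    (hfa : (f 0 : Matrix (Fin 3) (Fin 3) ℝ) = (5 : ℝ)⁻¹ • !![4, 3, 0; -3, 4, 0; 0, 0, 5])
    (hfb : (f 1 : Matrix (Fin 3) (Fin 3) ℝ) = (5 : ℝ)⁻¹ • !![4, 0, 3; 0, 5, 0; -3, 0, 4]) :
    Function.Injective (FreeGroup.lift f) ∧
      ∀ ω : FreeGroup (Fin 2), ω ≠ 1 →
        ((FreeGroup.lift f) ω : Matrix (Fin 3) (Fin 3) ℝ) ≠ 1 := by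
  refine ⟨(injective_iff_map_eq_one _).mpr fun ω h => ?_,
    fun ω hω => coe_lift_ne_one f hfa hfb hω⟩
  by_contra hω
  exact coe_lift_ne_one f hfa hfb hω (by rw [h, Units.val_one])
end

section
/- For every word x over {a, b}, there exist unitary matrices U_a, U_b ∈ U(2, ℂ), a unit vector u₀ ∈ ℂ², and a set S ⊆ {1, 2} of accepting coordinates such that for every word z over {a, b}: the acceptance probability of z is 0 if and only if z = x. In particular, the complement of the singleton language {x} is recognized by a 2-state nondeterministic MCQFA. -/
/-! Let `B_a = [[1, 2], [-2, 1]]` and `B_b = [[1, 2i], [2i, 1]]`. Since `B Bᴴ = 5`, the matrices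
`B / √5` are unitary and define a unitary representation `ρ` of the free group on `{a, b}`.
Starting from `u₀ = ρ(x)⁻¹ e` with `e = (0, 1)`, the word `z` ends in `ρ(z x⁻¹) e`; so it suffices
that the first coordinate of `ρ(g) e`, which is `0` for `g = 1`, is nonzero for every `g ≠ 1`.

If `g` has reduced word of length `k`, then `√5ᵏ ρ(g)` is a product of the Gaussian-integer
matrices `B_σ` and `B_σᴴ`. Modulo the prime `2 + i` each factor has rank one, `c rᵀ`, and a product
`c₁ r₁ᵀ c₂ r₂ᵀ ⋯ cₖ rₖᵀ e` is a nonzero multiple of `c₁` (whose first coordinate is `1`) as soon as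
all the pairings `rⱼ ⬝ cⱼ₊₁` and `rₖ ⬝ e` are nonzero. A finite check shows that they are,
except for the pairings of cancelling letters `σ σ⁻¹`, which do not occur in a reduced word. -/

open Matrix

namespace TwoStateMCQFA

section RankOne

variable {R n ι : Type*} [CommRing R] [NoZeroDivisors R] [Fintype n] [DecidableEq n]
  (col row : ι → n → R)

theorem exists_prod_vecMulVec_mulVec_eq_smul (a : ι) (w : List ι)
    (hw : (a :: w).IsChain fun i j => row i ⬝ᵥ col j ≠ 0) (v : n → R)
    (hv : ∀ b ∈ (a :: w).getLast?, row b ⬝ᵥ v ≠ 0) :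
    ∃ s : R, s ≠ 0 ∧
      ((a :: w).map fun i => vecMulVec (col i) (row i)).prod *ᵥ v = s • col a := by
  induction w generalizing a with
  | nil => exact ⟨row a ⬝ᵥ v, by simpa using hv, by simp [vecMulVec_mulVec]⟩
  | cons b w ih =>
    rw [List.isChain_cons_cons] at hw
    obtain ⟨s, hs, hsv⟩ := ih b hw.2 (by simpa using hv)
    refine ⟨s * (row a ⬝ᵥ col b), mul_ne_zero hs hw.1, ?_⟩
    rw [List.map_cons, List.prod_cons, ← mulVec_mulVec, hsv, mulVec_smul, vecMulVec_mulVec,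
      op_smul_eq_smul, smul_smul]

end RankOne

theorem sum_norm_sq_mulVec_of_mem_unitaryGroup {𝕜 n : Type*} [RCLike 𝕜] [Fintype n]
    [DecidableEq n] {A : Matrix n n 𝕜} (hA : A ∈ unitaryGroup n 𝕜) (v : n → 𝕜) :
    ∑ j, ‖(A *ᵥ v) j‖ ^ 2 = ∑ j, ‖v j‖ ^ 2 := by
  have hdot (w : n → 𝕜) : ((∑ j, ‖w j‖ ^ 2 : ℝ) : 𝕜) = star w ⬝ᵥ w := by
    simp [dotProduct, RCLike.conj_mul]
  apply RCLike.ofReal_injective (K := 𝕜)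
  rw [hdot, hdot, star_mulVec, ← dotProduct_mulVec, mulVec_mulVec, ← star_eq_conjTranspose,
    Unitary.star_mul_self_of_mem hA, one_mulVec]

theorem foldl_mulVec_eq_prod_mulVec {R n α : Type*} [Semiring R] [Fintype n] [DecidableEq n]
    (f : α → Matrix n n R) (z : List α) (u : n → R) :
    z.foldl (fun v c => f c *ᵥ v) u = (z.reverse.map f).prod *ᵥ u := by
  induction z generalizing u with
  | nil => simp
  | cons c z ih => simp [ih, mulVec_mulVec]

open GaussianInt

def gaussMatrix : Fin 2 → Matrix (Fin 2) (Fin 2) GaussianInt :=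
  ![!![1, 2; -2, 1], !![1, ⟨0, 2⟩; ⟨0, 2⟩, 1]]

theorem gaussMatrix_mul_conjTranspose (σ : Fin 2) :
    gaussMatrix σ * (gaussMatrix σ)ᴴ = (5 : GaussianInt) • 1 := by
  revert σ; decide

def letterMatrix (l : Fin 2 × Bool) : Matrix (Fin 2) (Fin 2) GaussianInt :=
  cond l.2 (gaussMatrix l.1) (gaussMatrix l.1)ᴴ

instance fact_prime_five : Fact (Nat.Prime 5) := ⟨Nat.prime_five⟩

/-- Reduction modulo the prime `2 + i`, sending `i` to `3`. The letter matrices have determinant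
`5 ∈ (2 + i)`, so they reduce to rank-one matrices `vecMulVec (rankOneCol l) (rankOneRow l)`. -/
def toZModFive : GaussianInt →+* ZMod 5 := Zsqrtd.lift ⟨3, by decide⟩

def rankOneCol (l : Fin 2 × Bool) : Fin 2 → ZMod 5 :=
  cond l.2 (![![1, 3], ![1, 1]] l.1) (![![1, 2], ![1, 4]] l.1)

def rankOneRow (l : Fin 2 × Bool) : Fin 2 → ZMod 5 :=
  cond l.2 (![![1, 2], ![1, 1]] l.1) (![![1, 3], ![1, 4]] l.1)

theorem letterMatrix_map_toZModFive (l : Fin 2 × Bool) :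
    (letterMatrix l).map toZModFive = vecMulVec (rankOneCol l) (rankOneRow l) := by
  revert l; decide

theorem rankOneRow_dotProduct_rankOneCol_ne_zero ⦃a b : Fin 2 × Bool⦄
    (h : a.1 = b.1 → a.2 = b.2) : rankOneRow a ⬝ᵥ rankOneCol b ≠ 0 := by
  revert a b; decide

theorem rankOneRow_dotProduct_ne_zero (l : Fin 2 × Bool) : rankOneRow l ⬝ᵥ ![0, 1] ≠ 0 := by
  revert l; decide

theorem rankOneCol_apply_zero (l : Fin 2 × Bool) : rankOneCol l 0 = 1 := by
  revert l; decide

theorem prod_letterMatrix_mulVec_apply_zero_ne_zero {w : List (Fin 2 × Bool)}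
    (hw : FreeGroup.IsReduced w) (hne : w ≠ []) :
    ((w.map letterMatrix).prod *ᵥ ![0, 1]) 0 ≠ 0 := by
  obtain ⟨a, w, rfl⟩ := List.exists_cons_of_ne_nil hne
  obtain ⟨s, hs, hprod⟩ := exists_prod_vecMulVec_mulVec_eq_smul rankOneCol rankOneRow a w
    (hw.imp rankOneRow_dotProduct_rankOneCol_ne_zero) ![0, 1]
    (fun b _ => rankOneRow_dotProduct_ne_zero b)
  have hletter : ⇑toZModFive.mapMatrix ∘ letterMatrix =
      fun l => vecMulVec (rankOneCol l) (rankOneRow l) :=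
    funext letterMatrix_map_toZModFive
  have he : toZModFive ∘ ![0, 1] = ![0, 1] := by decide
  intro h
  have hmod := congrArg toZModFive h
  rw [RingHom.map_mulVec, ← RingHom.mapMatrix_apply, map_list_prod, List.map_map, hletter, he,
    hprod, Pi.smul_apply, rankOneCol_apply_zero, smul_eq_mul, mul_one, map_zero] at hmod
  exact hs hmod

noncomputable def invSqrtFive : ℂ := ((√5 : ℝ) : ℂ)⁻¹

theorem invSqrtFive_ne_zero : invSqrtFive ≠ 0 := by
  simp [invSqrtFive]

theorem star_invSqrtFive : star invSqrtFive = invSqrtFive := by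
  simp [invSqrtFive, ← Complex.ofReal_inv]

theorem invSqrtFive_mul_self : invSqrtFive * invSqrtFive = 5⁻¹ := by
  rw [invSqrtFive, ← mul_inv, ← Complex.ofReal_mul, Real.mul_self_sqrt (by norm_num)]
  norm_num

theorem conjTranspose_map_toComplex {m n : Type*} (M : Matrix m n GaussianInt) :
    (M.map toComplex)ᴴ = Mᴴ.map toComplex :=
  (conjTranspose_map _ toComplex_star).symm

noncomputable def unitaryGenerator (σ : Fin 2) : unitaryGroup (Fin 2) ℂ :=
  ⟨invSqrtFive • (gaussMatrix σ).map toComplex, by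
    rw [mem_unitaryGroup_iff, star_smul, star_invSqrtFive, star_eq_conjTranspose,
      conjTranspose_map_toComplex, smul_mul_smul, ← Matrix.map_mul,
      gaussMatrix_mul_conjTranspose, invSqrtFive_mul_self, map_smul' _ _ _ (map_mul toComplex),
      Matrix.map_one _ (map_zero _) (map_one _), map_ofNat, smul_smul,
      inv_mul_cancel₀ (by norm_num), one_smul]⟩

theorem coe_cond_unitaryGenerator (l : Fin 2 × Bool) :
    ((cond l.2 (unitaryGenerator l.1) (unitaryGenerator l.1)⁻¹ : unitaryGroup (Fin 2) ℂ) :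
      Matrix (Fin 2) (Fin 2) ℂ) = invSqrtFive • (letterMatrix l).map toComplex := by
  obtain ⟨σ, _ | _⟩ := l
  · rw [cond_false, UnitaryGroup.inv_val, unitaryGenerator, star_smul, star_invSqrtFive,
      star_eq_conjTranspose, conjTranspose_map_toComplex]
    rfl
  · rfl

noncomputable def freeRep : FreeGroup (Fin 2) →* unitaryGroup (Fin 2) ℂ :=
  FreeGroup.lift unitaryGenerator

theorem coe_freeRep_mk (L : List (Fin 2 × Bool)) :
    (freeRep (FreeGroup.mk L) : Matrix (Fin 2) (Fin 2) ℂ) =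
      invSqrtFive ^ L.length • ((L.map letterMatrix).prod).map toComplex := by
  rw [freeRep, FreeGroup.lift_mk]
  induction L with
  | nil => simp
  | cons l L ih =>
    rw [List.map_cons, List.prod_cons, UnitaryGroup.mul_val, ih, coe_cond_unitaryGenerator,
      smul_mul_smul, ← Matrix.map_mul, List.map_cons, List.prod_cons, List.length_cons,
      pow_succ']

theorem freeRep_mulVec_apply_zero_ne_zero {g : FreeGroup (Fin 2)} (hg : g ≠ 1) :
    ((freeRep g : Matrix (Fin 2) (Fin 2) ℂ) *ᵥ ![0, 1]) 0 ≠ 0 := by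
  have he : ![0, 1] = toComplex ∘ ![0, 1] := by
    ext j; fin_cases j <;> simp
  rw [← FreeGroup.mk_toWord (x := g), coe_freeRep_mk, smul_mulVec, Pi.smul_apply, smul_eq_mul]
  refine mul_ne_zero (pow_ne_zero _ invSqrtFive_ne_zero) ?_
  rw [he, ← RingHom.map_mulVec, ne_eq, toComplex_eq_zero]
  exact prod_letterMatrix_mulVec_apply_zero_ne_zero FreeGroup.isReduced_toWord
    (by rwa [ne_eq, FreeGroup.toWord_eq_nil_iff])

/-- The automaton reads `z` from left to right, so the first letter of `z` acts first. -/
def ofInput (z : List (Fin 2)) : FreeGroup (Fin 2) := FreeGroup.mk (z.reverse.map (·, true))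

theorem ofInput_injective : Function.Injective ofInput := by
  have hred (z : List (Fin 2)) : FreeGroup.IsReduced (z.reverse.map (·, true)) :=
    (List.pairwise_map.2 (List.pairwise_of_forall fun _ _ _ => rfl)).isChain
  intro z z' h
  have hword := congrArg FreeGroup.toWord h
  rw [ofInput, ofInput, FreeGroup.toWord_mk, FreeGroup.toWord_mk, (hred z).reduce_eq,
    (hred z').reduce_eq] at hword
  exact List.reverse_injective (List.map_injective_iff.2 (fun _ _ h => (Prod.mk.inj h).1) hword)

theorem coe_freeRep_ofInput (z : List (Fin 2)) :
    (freeRep (ofInput z) : Matrix (Fin 2) (Fin 2) ℂ) =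
      (z.reverse.map fun σ => (unitaryGenerator σ : Matrix (Fin 2) (Fin 2) ℂ)).prod := by
  rw [ofInput, freeRep, FreeGroup.lift_mk, List.map_map, Submonoid.coe_list_prod, List.map_map]
  rfl

end TwoStateMCQFA

open TwoStateMCQFA

/-- for every word `x` over `{a, b}` (here `Fin 2`), the complement of
the singleton language `{x}` is recognized by a 2-state nondeterministic MCQFA: some
2-state MCQFA accepts a word `z` with probability `0` iff `z = x`. -/
theorem stmt10 (x : List (Fin 2)) :
    ∃ (U : Fin 2 → Matrix (Fin 2) (Fin 2) ℂ) (u₀ : Fin 2 → ℂ) (S : Finset (Fin 2)),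
      (∀ τ, U τ ∈ Matrix.unitaryGroup (Fin 2) ℂ) ∧
      (∑ j, ‖u₀ j‖ ^ 2 = 1) ∧
      ∀ z : List (Fin 2),
        (∑ j ∈ S, ‖(z.foldl (fun v c => (U c).mulVec v) u₀) j‖ ^ 2 = 0 ↔
          z = x) := by
  refine ⟨fun σ => unitaryGenerator σ,
    ((freeRep (ofInput x))⁻¹ : unitaryGroup (Fin 2) ℂ) *ᵥ ![0, 1], {0},
    fun σ => (unitaryGenerator σ).2, ?_, fun z => ?_⟩
  · rw [sum_norm_sq_mulVec_of_mem_unitaryGroup (SetLike.coe_mem _)]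
    simp
  · rw [foldl_mulVec_eq_prod_mulVec, ← coe_freeRep_ofInput, mulVec_mulVec,
      ← UnitaryGroup.mul_val, ← map_inv, ← map_mul, Finset.sum_singleton, sq_eq_zero_iff,
      norm_eq_zero]
    constructor
    · contrapose
      intro hne
      exact freeRep_mulVec_apply_zero_ne_zero (mul_inv_eq_one.not.2 (ofInput_injective.ne hne))
    · rintro rfl
      simp
end

section
/- Let d ≥ 0 and t > 0 be integers. Let M = [[1 − 1/t, −1/t], [1/t, 1 + 1/t]] ∈ M₂(ℝ) (an affine matrix: each column sums to 1) and let v₀ = (1 + d/t, −d/t) ∈ ℝ² (an affine vector). Then for every j ≥ 0, M^j v₀ = (1 + (d − j)/t, (j − d)/t); in particular M^d v₀ = (1, 0) and M^{d+t} v₀ = (0, 1). Consequently the 2-state AfA with initial vector v₀, matrix M for the single symbol a, identity end-marker matrix, and accepting coordinate 1 accepts a^d with probability 1 and accepts a^{d+t} with probability 0, separating the unary pair (a^d, a^{d+t}) exactly. -/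
/-!
On affine vectors the matrix `M` is a translation: `M - 1 = (1/t) • !![-1, -1; 1, 1]` sends every
vector with coordinate sum `1` to `(-1/t, 1/t)`. Since `v₀ = (1, 0) - (d/t) • (-1, 1)`, after `j`
steps one is at `(1, 0) + ((j - d)/t) • (-1, 1)`, which is `(1, 0)` for `j = d` and `(0, 1)` for
`j = d + t`.
-/

open Matrix

noncomputable section

namespace UnaryShift

def matrix (t : ℝ) : Matrix (Fin 2) (Fin 2) ℝ :=
  !![1 - 1 / t, -(1 / t); 1 / t, 1 + 1 / t]

def step (t : ℝ) : Fin 2 → ℝ := ![-(1 / t), 1 / t]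

theorem matrix_mulVec (t : ℝ) {v : Fin 2 → ℝ} (hv : v 0 + v 1 = 1) :
    matrix t *ᵥ v = v + step t := by
  ext i
  fin_cases i <;>
    simp only [mulVec, dotProduct, matrix, step, Fin.zero_eta, Fin.mk_one, Fin.isValue, of_apply,
      cons_val', cons_val_fin_one, cons_val_zero, cons_val_one, Fin.sum_univ_two, Pi.add_apply]
  · linear_combination (-(1 / t)) * hv
  · linear_combination (1 / t) * hv

theorem matrix_pow_mulVec (t : ℝ) (j : ℕ) {v : Fin 2 → ℝ} (hv : v 0 + v 1 = 1) :
    matrix t ^ j *ᵥ v = v + (j : ℝ) • step t := by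
  induction j generalizing v with
  | zero => simp
  | succ j ih =>
    have hstep : (v + step t) 0 + (v + step t) 1 = 1 := by
      simp only [step, Pi.add_apply, cons_val_zero, cons_val_one, cons_val_fin_one]
      linarith
    rw [pow_succ, ← mulVec_mulVec, matrix_mulVec t hv, ih hstep]
    push_cast
    module

end UnaryShift

end

open UnaryShift in
/-- the 2-state AfA `S_{d,t}` (matrix `M` below, initial vector
`(1 + d/t, -d/t)`, identity end-marker, accepting coordinate 1) separates the
unary pair `(a^d, a^{d+t})` exactly. -/
theorem stmt11 (d t : ℕ) (ht : 0 < t) :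
    let M : Matrix (Fin 2) (Fin 2) ℝ :=
      !![1 - 1 / (t : ℝ), -(1 / (t : ℝ)); 1 / (t : ℝ), 1 + 1 / (t : ℝ)]
    let v₀ : Fin 2 → ℝ := ![1 + (d : ℝ) / t, -((d : ℝ) / t)]
    (∀ j : ℕ, (M ^ j).mulVec v₀ = ![1 + ((d : ℝ) - j) / t, ((j : ℝ) - d) / t]) ∧
    (M ^ d).mulVec v₀ = ![1, 0] ∧
    (M ^ (d + t)).mulVec v₀ = ![0, 1] ∧
    |(M ^ d).mulVec v₀ 0| / (|(M ^ d).mulVec v₀ 0| + |(M ^ d).mulVec v₀ 1|) = 1 ∧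
    |(M ^ (d + t)).mulVec v₀ 0| /
      (|(M ^ (d + t)).mulVec v₀ 0| + |(M ^ (d + t)).mulVec v₀ 1|) = 0 := by
  intro M v₀
  have orbit (j : ℕ) : (M ^ j).mulVec v₀ = ![1 + ((d : ℝ) - j) / t, ((j : ℝ) - d) / t] := by
    have hv₀ : v₀ 0 + v₀ 1 = 1 := by simp [v₀]
    rw [show M = matrix t from rfl, matrix_pow_mulVec t j hv₀]
    ext i
    fin_cases i <;> simp [v₀, step] <;> ring
  have at_d : (M ^ d).mulVec v₀ = ![1, 0] := by
    rw [orbit d]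
    simp
  have at_d_add_t : (M ^ (d + t)).mulVec v₀ = ![0, 1] := by
    have ht' : (t : ℝ) ≠ 0 := by positivity
    rw [orbit (d + t)]
    ext i
    fin_cases i <;> simp [ht']
  refine ⟨orbit, at_d, at_d_add_t, ?_, ?_⟩ <;> simp [at_d, at_d_add_t]
end

section
/- Let x and y be any two distinct binary words (over {0, 1}). Then there exist real 2×2 affine matrices A_0, A_1, A_$ (each column summing to 1) and an affine vector v₀ ∈ ℝ² such that the final vector on x, namely A_$ A_{x_n}⋯A_{x₁} v₀, equals (0, 1), and the final vector on y equals (1, 0). Consequently, taking coordinate 2 as the only accepting coordinate, this 2-state AfA accepts x with probability 1 and accepts y with probability 0: any pair of distinct words is separated by a 2-state AfA exactly. -/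
/-!
The affine vectors of `ℝ²` form the line `t ↦ (t, 1 - t)`, and every affine map `t ↦ a t + b`
of that line is realised by an affine `2 × 2` matrix. Reading letter `σ` by `t ↦ (t + σ + 1) / 4`
from `t = 0` writes the word as a base-4 fraction with digits `1, 2`, most significant digit last;
these digits never vanish, so distinct words give distinct numbers `p ≠ q`. The end-marker is
the affine map sending `p ↦ 0` and `q ↦ 1`, i.e. the final vectors `(0, 1)` and `(1, 0)`.
-/

open Matrix Set

theorem List.foldl_injective {α β : Type*} {f : β → α → β} {b : β} {s : Set β} (hb : b ∈ s)
    (hmaps : ∀ a, MapsTo (f · a) s s)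
    (hinj : ∀ a a', ∀ t ∈ s, ∀ t' ∈ s, f t a = f t' a' → a = a' ∧ t = t')
    (hne : ∀ a, ∀ t ∈ s, f t a ≠ b) :
    Function.Injective (List.foldl f b) := by
  have hmem : ∀ w : List α, w.foldl f b ∈ s := fun w => by
    induction w using List.reverseRecOn with
    | nil => exact hb
    | append_singleton w a ih => simpa only [List.foldl_concat] using hmaps a ih
  intro x
  induction x using List.reverseRecOn with
  | nil =>
    intro y h
    rcases y.eq_nil_or_concat' with rfl | ⟨w, a, rfl⟩
    · rfl
    · rw [List.foldl_concat] at h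
      exact absurd h.symm (hne a _ (hmem w))
  | append_singleton w a ih =>
    intro y h
    rcases y.eq_nil_or_concat' with rfl | ⟨w', a', rfl⟩
    · rw [List.foldl_concat] at h
      exact absurd h (hne a _ (hmem w))
    · rw [List.foldl_concat, List.foldl_concat] at h
      obtain ⟨rfl, hw⟩ := hinj a a' _ (hmem w) _ (hmem w') h
      rw [ih hw]

def affVec (t : ℝ) : Fin 2 → ℝ := ![t, 1 - t]

/-- The matrix of `t ↦ a t + b` on affine vectors: its columns are the images of
`(1, 0) = affVec 1` and `(0, 1) = affVec 0`. -/
def affineMatrix (a b : ℝ) : Matrix (Fin 2) (Fin 2) ℝ :=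
  !![a + b, b; 1 - (a + b), 1 - b]

@[simp] theorem affVec_zero : affVec 0 = ![0, 1] := by simp [affVec]

@[simp] theorem affVec_one : affVec 1 = ![1, 0] := by simp [affVec]

theorem sum_affVec (t : ℝ) : ∑ i, affVec t i = 1 := by
  simp [affVec, Fin.sum_univ_two]

theorem sum_affineMatrix_col (a b : ℝ) (c : Fin 2) : ∑ r, affineMatrix a b r c = 1 := by
  fin_cases c <;> simp [affineMatrix, Fin.sum_univ_two]

theorem affineMatrix_mulVec_affVec (a b t : ℝ) :
    affineMatrix a b *ᵥ affVec t = affVec (a * t + b) := by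
  ext i
  fin_cases i <;> simp [affineMatrix, affVec, mulVec, dotProduct, Fin.sum_univ_two] <;> ring

theorem foldl_affineMatrix_mulVec_affVec {α : Type*} (a b : α → ℝ) (z : List α) (t : ℝ) :
    z.foldl (fun v c => affineMatrix (a c) (b c) *ᵥ v) (affVec t) =
      affVec (z.foldl (fun t c => a c * t + b c) t) :=
  List.foldl_hom affVec fun _ _ => affineMatrix_mulVec_affVec _ _ _

theorem exists_affine_map_eq_zero_eq_one {p q : ℝ} (h : p ≠ q) :
    ∃ a b : ℝ, a * p + b = 0 ∧ a * q + b = 1 := by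
  have : q - p ≠ 0 := sub_ne_zero.mpr h.symm
  exact ⟨(q - p)⁻¹, -p / (q - p), by field_simp; ring, by field_simp; ring⟩

noncomputable def quaternaryCode (z : List (Fin 2)) : ℝ :=
  z.foldl (fun t (c : Fin 2) => 4⁻¹ * t + ((c : ℝ) + 1) / 4) 0

noncomputable def letterMatrix (c : Fin 2) : Matrix (Fin 2) (Fin 2) ℝ :=
  affineMatrix 4⁻¹ (((c : ℝ) + 1) / 4)

theorem foldl_letterMatrix_mulVec (z : List (Fin 2)) :
    z.foldl (fun v c => letterMatrix c *ᵥ v) (affVec 0) = affVec (quaternaryCode z) :=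
  foldl_affineMatrix_mulVec_affVec _ _ z 0

theorem quaternaryCode_injective : Function.Injective quaternaryCode := by
  have hdigit (σ : Fin 2) : (0 : ℝ) ≤ σ ∧ (σ : ℝ) ≤ 1 := by fin_cases σ <;> norm_num
  unfold quaternaryCode
  refine List.foldl_injective (left_mem_Ico.mpr (zero_lt_one' ℝ)) ?_ ?_ ?_
  · intro σ t ⟨h0, h1⟩
    obtain ⟨hσ0, hσ1⟩ := hdigit σ
    constructor <;> linarith
  · intro σ σ' t ⟨h0, h1⟩ t' ⟨h0', h1'⟩ h
    have hσ : σ = σ' := by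
      fin_cases σ <;> fin_cases σ' <;> first | rfl | (norm_num at h; linarith)
    subst hσ
    exact ⟨rfl, by linarith⟩
  · intro σ t ⟨h0, _⟩
    obtain ⟨hσ0, _⟩ := hdigit σ
    exact ne_of_gt (by linarith)

/-- any pair of distinct binary words (lists over `Fin 2`) is separated
exactly by a 2-state AfA: there are affine matrices `A₀, A₁, A$` and an affine initial
vector `v₀` such that the final vector on `x` is `(0,1)` and on `y` is `(1,0)`; with
accepting coordinate `1` this accepts `x` with probability 1 and `y` with probability 0. -/
theorem stmt13 (x y : List (Fin 2)) (hxy : x ≠ y) :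
    ∃ (A : Fin 2 → Matrix (Fin 2) (Fin 2) ℝ) (Ad : Matrix (Fin 2) (Fin 2) ℝ)
      (v₀ : Fin 2 → ℝ),
      (∀ σ : Fin 2, ∀ c : Fin 2, ∑ r, A σ r c = 1) ∧
      (∀ c : Fin 2, ∑ r, Ad r c = 1) ∧
      (∑ i, v₀ i = 1) ∧
      Ad.mulVec (x.foldl (fun v c => (A c).mulVec v) v₀) = ![0, 1] ∧
      Ad.mulVec (y.foldl (fun v c => (A c).mulVec v) v₀) = ![1, 0] ∧
      (|Ad.mulVec (x.foldl (fun v c => (A c).mulVec v) v₀) 1| /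
        (∑ i, |Ad.mulVec (x.foldl (fun v c => (A c).mulVec v) v₀) i|) = 1) ∧
      (|Ad.mulVec (y.foldl (fun v c => (A c).mulVec v) v₀) 1| /
        (∑ i, |Ad.mulVec (y.foldl (fun v c => (A c).mulVec v) v₀) i|) = 0) := by
  obtain ⟨a, b, hx, hy⟩ :=
    exists_affine_map_eq_zero_eq_one (quaternaryCode_injective.ne hxy)
  have hfx :
      affineMatrix a b *ᵥ x.foldl (fun v c => letterMatrix c *ᵥ v) (affVec 0) = ![0, 1] := by
    rw [foldl_letterMatrix_mulVec, affineMatrix_mulVec_affVec, hx, affVec_zero]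
  have hfy :
      affineMatrix a b *ᵥ y.foldl (fun v c => letterMatrix c *ᵥ v) (affVec 0) = ![1, 0] := by
    rw [foldl_letterMatrix_mulVec, affineMatrix_mulVec_affVec, hy, affVec_one]
  refine ⟨letterMatrix, affineMatrix a b, affVec 0, fun _ => sum_affineMatrix_col _ _,
    sum_affineMatrix_col a b, sum_affVec 0, hfx, hfy, ?_, ?_⟩
  · rw [hfx]; norm_num [Fin.sum_univ_two]
  · rw [hfy]; norm_num [Fin.sum_univ_two]
end

section
/- Let x be a binary word. Consider the 2-state AfA with A_0 = [[2, 0], [−1, 1]], A_1 = [[3, 1], [−2, 0]], initial vector v₀ = (1, 0), end-marker matrix A_$ = [[e(x) − 1, e(x)], [2 − e(x), 1 − e(x)]], and accepting coordinate 2. Then for every binary word z, the final vector is v_f^z = (e(x) − e(z), 1 − e(x) + e(z)); consequently the AfA accepts x with probability 1 and accepts every binary word z ≠ x with probability at most 2/3. -/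
/-!
Both digit matrices preserve the line of affine vectors `(t, 1 - t)` and act on it as
`t ↦ 2t + σ`, which is exactly the recursion defining `e`. Hence after reading `z` the state is
`(e(z), 1 - e(z))`, and the end-marker sends it to `(d, 1 - d)` with `d = e(x) - e(z)`. The
acceptance probability `|1 - d| / (|d| + |1 - d|)` equals `1` at `d = 0`; since `e` is injective,
`z ≠ x` makes `d` a nonzero integer, and there the probability is at most `2/3`.
-/

open Matrix

/-- `e(z)`: the value of the binary numeral `1z`, i.e. `e(ε) = 1`, `e(zσ) = 2·e(z) + σ`. -/
def binVal (z : List (Fin 2)) : ℕ :=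
  z.foldl (fun n σ => 2 * n + σ.val) 1

lemma binVal_nil : binVal [] = 1 := rfl

lemma binVal_append_singleton (z : List (Fin 2)) (σ : Fin 2) :
    binVal (z ++ [σ]) = 2 * binVal z + σ.val :=
  List.foldl_concat _ _ _ _

lemma one_le_binVal (z : List (Fin 2)) : 1 ≤ binVal z := by
  induction z using List.reverseRecOn with
  | nil => exact le_rfl
  | append_singleton z σ ih => rw [binVal_append_singleton]; omega

lemma binVal_append_singleton_ne_binVal_nil (z : List (Fin 2)) (σ : Fin 2) :
    binVal (z ++ [σ]) ≠ binVal [] := by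
  rw [binVal_append_singleton, binVal_nil]
  have := one_le_binVal z
  omega

/-- The last digit of `1z` is read off its parity, the rest from its half. -/
theorem binVal_injective : Function.Injective binVal := by
  intro z
  induction z using List.reverseRecOn with
  | nil =>
    intro x h
    obtain rfl | ⟨x, τ, rfl⟩ := x.eq_nil_or_concat'
    · rfl
    · exact absurd h.symm (binVal_append_singleton_ne_binVal_nil x τ)
  | append_singleton z σ ih =>
    intro x h
    obtain rfl | ⟨x, τ, rfl⟩ := x.eq_nil_or_concat'
    · exact absurd h (binVal_append_singleton_ne_binVal_nil z σ)
    · rw [binVal_append_singleton, binVal_append_singleton] at h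
      have hσ := σ.isLt
      have hτ := τ.isLt
      rw [ih (by omega : binVal z = binVal x), Fin.ext (by omega : σ.val = τ.val)]

abbrev digitMatrix : Fin 2 → Matrix (Fin 2) (Fin 2) ℝ := ![!![2, 0; -1, 1], !![3, 1; -2, 0]]

lemma digitMatrix_mulVec (t : ℝ) (σ : Fin 2) :
    digitMatrix σ *ᵥ ![t, 1 - t] = ![2 * t + σ.val, 1 - (2 * t + σ.val)] := by
  ext i
  fin_cases σ <;> fin_cases i <;> simp [mulVec, dotProduct, Fin.sum_univ_two] <;> ring

lemma foldl_digitMatrix_mulVec (z : List (Fin 2)) :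
    z.foldl (fun v σ => digitMatrix σ *ᵥ v) ![1, 0] = ![(binVal z : ℝ), 1 - binVal z] := by
  have h := List.foldl_hom (l := z) (init := 1) (fun n : ℕ => ![(n : ℝ), 1 - n])
    (g₁ := fun n σ => 2 * n + σ.val) (g₂ := fun v σ => digitMatrix σ *ᵥ v)
    (fun n σ => by simp only [digitMatrix_mulVec]; push_cast; rfl)
  rw [Nat.cast_one, sub_self] at h
  exact h

lemma endMatrix_mulVec (a t : ℝ) :
    !![a - 1, a; 2 - a, 1 - a] *ᵥ ![t, 1 - t] = ![a - t, 1 - a + t] := by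
  ext i
  fin_cases i <;> simp [mulVec, dotProduct, Fin.sum_univ_two] <;> ring

lemma abs_one_sub_div_le_of_int_ne_zero {d : ℤ} (hd : d ≠ 0) :
    |1 - (d : ℝ)| / (|(d : ℝ)| + |1 - (d : ℝ)|) ≤ 2 / 3 := by
  rcases hd.lt_or_gt with hneg | hpos
  · have h : (d : ℝ) ≤ -1 := by exact_mod_cast Int.le_sub_one_of_lt hneg
    rw [abs_of_neg (show (d : ℝ) < 0 by linarith),
      abs_of_pos (show 0 < 1 - (d : ℝ) by linarith),
      div_le_div_iff₀ (by linarith) (by norm_num)]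
    linarith
  · have h : (1 : ℝ) ≤ d := by exact_mod_cast hpos
    rw [abs_of_pos (show 0 < (d : ℝ) by linarith),
      abs_of_nonpos (show 1 - (d : ℝ) ≤ 0 by linarith),
      div_le_div_iff₀ (by linarith) (by norm_num)]
    linarith

/-- the 2-state AfA `B_x` (matrices `A₀, A₁`, initial vector `(1,0)`,
end-marker matrix `[[e(x)-1, e(x)],[2-e(x), 1-e(x)]]`, accepting coordinate 2) yields
the final vector `(e(x) - e(z), 1 - e(x) + e(z))` on any input `z`; it accepts `x` with
probability 1 and every `z ≠ x` with probability at most `2/3`. -/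
theorem stmt14 (x : List (Fin 2)) :
    let A : Fin 2 → Matrix (Fin 2) (Fin 2) ℝ :=
      ![!![2, 0; -1, 1], !![3, 1; -2, 0]]
    let Ad : Matrix (Fin 2) (Fin 2) ℝ :=
      !![(binVal x : ℝ) - 1, (binVal x : ℝ); 2 - (binVal x : ℝ), 1 - (binVal x : ℝ)]
    let vf : List (Fin 2) → Fin 2 → ℝ :=
      fun z => Ad.mulVec (z.foldl (fun v c => (A c).mulVec v) ![1, 0])
    (∀ z : List (Fin 2),
      vf z = ![(binVal x : ℝ) - (binVal z : ℝ), 1 - (binVal x : ℝ) + (binVal z : ℝ)]) ∧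
    (|vf x 1| / (|vf x 0| + |vf x 1|) = 1) ∧
    (∀ z : List (Fin 2), z ≠ x → |vf z 1| / (|vf z 0| + |vf z 1|) ≤ 2 / 3) := by
  intro A Ad vf
  have hvf (z : List (Fin 2)) : vf z = ![(binVal x : ℝ) - binVal z, 1 - binVal x + binVal z] :=
    (congrArg (Ad *ᵥ ·) (foldl_digitMatrix_mulVec z)).trans (endMatrix_mulVec _ _)
  refine ⟨hvf, by simp [hvf], fun z hz => ?_⟩
  have hd : (binVal x : ℤ) - binVal z ≠ 0 :=
    sub_ne_zero.2 (by exact_mod_cast binVal_injective.ne hz.symm)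
  have h := abs_one_sub_div_le_of_int_ne_zero hd
  push_cast at h
  simpa [hvf, sub_add] using h
end

section
/- Let x be a binary word and let k ≥ 1 be an integer. Then there exist real 3×3 affine matrices A_0, A_1, A_$ (each column summing to 1), an affine vector v₀ ∈ ℝ³, and an accepting coordinate such that the resulting 3-state AfA accepts x with probability 1 and accepts every binary word z ≠ x with probability at most 2/(2k + 1). (The construction arranges the final vector on input z to be (−k·i, (k+1)·i, 1 − i) where i = e(x) − e(z).) In particular, for every ε > 0 a 3-state AfA separates x from every other word with one-sided error smaller than ε. -/
/-!
The state `(n, 0, 1 - n)` is affine for every real `n`, and the matrix `A_σ` maps it to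
`(2n + σ, 0, 1 - (2n + σ))`; starting from `(1, 0, 0)`, the word `z` therefore leads to
`(e(z), 0, 1 - e(z))`. The end-marker turns this into `(-k i, (k + 1) i, 1 - i)` with
`i = e(x) - e(z)`. For `z = x` only the last coordinate survives. Otherwise `e` is injective, so
`|i| ≥ 1`, and then `|1 - i| ≤ 2 |i|` while the total weight is at least `(2k + 1) |i|`.
-/

open Matrix

def binaryValue (z : List (Fin 2)) : ℕ := z.foldl (fun m b => 2 * m + b) 1

@[simp]
lemma binaryValue_nil : binaryValue [] = 1 := rfl

lemma binaryValue_concat (z : List (Fin 2)) (b : Fin 2) :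
    binaryValue (z ++ [b]) = 2 * binaryValue z + b := by
  simp [binaryValue]

lemma one_le_binaryValue (z : List (Fin 2)) : 1 ≤ binaryValue z := by
  induction z using List.reverseRecOn with
  | nil => rfl
  | append_singleton z b _ => rw [binaryValue_concat]; omega

lemma binaryValue_injective : Function.Injective binaryValue := by
  intro z
  induction z using List.reverseRecOn with
  | nil =>
    intro w h
    rcases w.eq_nil_or_concat' with rfl | ⟨w, d, rfl⟩
    · rfl
    · have := one_le_binaryValue w
      rw [binaryValue_concat, binaryValue_nil] at h
      omega
  | append_singleton z b ih =>
    intro w h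
    rcases w.eq_nil_or_concat' with rfl | ⟨w, d, rfl⟩
    · have := one_le_binaryValue z
      rw [binaryValue_concat, binaryValue_nil] at h
      omega
    · rw [binaryValue_concat, binaryValue_concat] at h
      have hb := b.isLt
      have hd := d.isLt
      rw [ih (by omega : binaryValue z = binaryValue w), Fin.ext (by omega : b.val = d.val)]

def doublingMatrix (σ : Fin 2) : Matrix (Fin 3) (Fin 3) ℝ :=
  !![2 + σ, σ, σ;
     0, 0, 0;
     -1 - σ, 1 - σ, 1 - σ]

lemma doublingMatrix_col_sum (σ : Fin 2) (c : Fin 3) : ∑ r, doublingMatrix σ r c = 1 := by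
  fin_cases c <;> simp [doublingMatrix, Fin.sum_univ_three]; ring

lemma doublingMatrix_mulVec (σ : Fin 2) (n : ℝ) :
    doublingMatrix σ *ᵥ ![n, 0, 1 - n] = ![2 * n + σ, 0, 1 - (2 * n + σ)] := by
  ext i
  fin_cases i <;> simp [doublingMatrix, mulVec, dotProduct, Fin.sum_univ_three] <;> ring

lemma foldl_doublingMatrix_mulVec (z : List (Fin 2)) :
    z.foldl (fun v c => doublingMatrix c *ᵥ v) ![1, 0, 0] =
      ![(binaryValue z : ℝ), 0, 1 - binaryValue z] := by
  induction z using List.reverseRecOn with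
  | nil => simp
  | append_singleton z b ih =>
    rw [List.foldl_concat, ih, doublingMatrix_mulVec, binaryValue_concat]
    push_cast
    rfl

def endMarkerMatrix (E K : ℝ) : Matrix (Fin 3) (Fin 3) ℝ :=
  !![K - K * E, -(K * E), -(K * E);
     (K + 1) * E - (K + 1), (K + 1) * E, (K + 1) * E;
     2 - E, 1 - E, 1 - E]

lemma endMarkerMatrix_col_sum (E K : ℝ) (c : Fin 3) : ∑ r, endMarkerMatrix E K r c = 1 := by
  fin_cases c <;> simp [endMarkerMatrix, Fin.sum_univ_three] <;> ring

lemma endMarkerMatrix_mulVec (E K e : ℝ) :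
    endMarkerMatrix E K *ᵥ ![e, 0, 1 - e] =
      ![-(K * (E - e)), (K + 1) * (E - e), 1 - (E - e)] := by
  ext i
  fin_cases i <;> simp [endMarkerMatrix, mulVec, dotProduct, Fin.sum_univ_three] <;> ring

noncomputable def acceptanceProb {n : ℕ} (v : Fin n → ℝ) (j : Fin n) : ℝ :=
  |v j| / ∑ i, |v i|

lemma acceptanceProb_le {K i : ℝ} (hK : 0 ≤ K) (hi : 1 ≤ |i|) :
    acceptanceProb ![-(K * i), (K + 1) * i, 1 - i] 2 ≤ 2 / (2 * K + 1) := by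
  simp only [acceptanceProb, Fin.sum_univ_three, cons_val_zero, cons_val_one, cons_val_two,
    head_cons, tail_cons, abs_neg, abs_mul, abs_of_nonneg hK,
    abs_of_nonneg (by linarith : 0 ≤ K + 1)]
  have hlast : |1 - i| ≤ 2 * |i| := by
    calc |1 - i| ≤ |1| + |i| := abs_sub _ _
      _ ≤ 2 * |i| := by rw [abs_one]; linarith
  rw [div_le_div_iff₀ (by positivity) (by linarith)]
  nlinarith [abs_nonneg (1 - i)]

lemma one_le_abs_natCast_sub_natCast {a b : ℕ} (h : a ≠ b) : (1 : ℝ) ≤ |(a : ℝ) - b| := by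
  exact_mod_cast Int.one_le_abs (sub_ne_zero.mpr (Int.ofNat_inj.not.mpr h))

theorem stmt16_general (x : List (Fin 2)) (k : ℕ) :
    ∃ (A : Fin 2 → Matrix (Fin 3) (Fin 3) ℝ) (Ad : Matrix (Fin 3) (Fin 3) ℝ)
      (v₀ : Fin 3 → ℝ) (j : Fin 3),
      (∀ σ : Fin 2, ∀ c : Fin 3, ∑ r, A σ r c = 1) ∧
      (∀ c : Fin 3, ∑ r, Ad r c = 1) ∧
      (∑ i, v₀ i = 1) ∧
      (|Ad.mulVec (x.foldl (fun v c => (A c).mulVec v) v₀) j| /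
        (∑ i, |Ad.mulVec (x.foldl (fun v c => (A c).mulVec v) v₀) i|) = 1) ∧
      (∀ z : List (Fin 2), z ≠ x →
        |Ad.mulVec (z.foldl (fun v c => (A c).mulVec v) v₀) j| /
          (∑ i, |Ad.mulVec (z.foldl (fun v c => (A c).mulVec v) v₀) i|) ≤
            2 / (2 * (k : ℝ) + 1)) := by
  refine ⟨doublingMatrix, endMarkerMatrix (binaryValue x) k, ![1, 0, 0], 2,
    doublingMatrix_col_sum, endMarkerMatrix_col_sum _ _, by simp [Fin.sum_univ_three], ?_, ?_⟩
  · rw [foldl_doublingMatrix_mulVec, endMarkerMatrix_mulVec, sub_self]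
    simp [Fin.sum_univ_three]
  · intro z hz
    rw [foldl_doublingMatrix_mulVec, endMarkerMatrix_mulVec]
    exact acceptanceProb_le k.cast_nonneg
      (one_le_abs_natCast_sub_natCast (binaryValue_injective.ne hz.symm))

/-- for every binary word `x` and every integer `k ≥ 1`, a 3-state AfA
accepts `x` with probability 1 and every binary word `z ≠ x` with probability at most
`2/(2k+1)`; so 3-state AfAs separate `x` from all other words with arbitrarily small
one-sided error. -/
theorem stmt16 (x : List (Fin 2)) (k : ℕ) (hk : 1 ≤ k) :
    ∃ (A : Fin 2 → Matrix (Fin 3) (Fin 3) ℝ) (Ad : Matrix (Fin 3) (Fin 3) ℝ)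
      (v₀ : Fin 3 → ℝ) (j : Fin 3),
      (∀ σ : Fin 2, ∀ c : Fin 3, ∑ r, A σ r c = 1) ∧
      (∀ c : Fin 3, ∑ r, Ad r c = 1) ∧
      (∑ i, v₀ i = 1) ∧
      (|Ad.mulVec (x.foldl (fun v c => (A c).mulVec v) v₀) j| /
        (∑ i, |Ad.mulVec (x.foldl (fun v c => (A c).mulVec v) v₀) i|) = 1) ∧
      (∀ z : List (Fin 2), z ≠ x →
        |Ad.mulVec (z.foldl (fun v c => (A c).mulVec v) v₀) j| /
          (∑ i, |Ad.mulVec (z.foldl (fun v c => (A c).mulVec v) v₀) i|) ≤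
            2 / (2 * (k : ℝ) + 1)) :=
  stmt16_general x k
end

section
/- Let Y be a finite nonempty set of binary words with |Y| = n, and let x be a binary word with x ∉ Y. Then there exist real affine matrices A_0, A_1, A_$ of size 2^n × 2^n (each column summing to 1), an affine vector v₀ ∈ ℝ^{2^n}, and an accepting coordinate such that the resulting 2^n-state AfA accepts x with probability 1 and accepts every y ∈ Y with probability 0; that is, x is separated from every member of Y by a 2^{|Y|}-state AfA exactly. -/
/-!
Encode a word `w` over `Fin k` by its bijective base-`(k+1)` value `N w`, which is injective and
satisfies `N (w ++ [c]) = (k+1) N w + (c+1)`. For each `y ∈ Y` the quantity `N w - N y` therefore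
follows an affine recurrence, which a 2-state AfA carries in the affine state `(s, 1 - s)`. The
Kronecker product of these `|Y|` automata is an AfA with `2^|Y|` states whose coordinate
`(0, …, 0)` equals `∏ y ∈ Y, (N w - N y)`, nonzero exactly when `w ∉ Y`. The end-marker sends that
coordinate, scaled by the inverse of its value on `x`, to the accepting state and the remaining
mass to a rejecting one.
-/

open Matrix

namespace AffineAutomaton

section Automaton

variable {α ι κ : Type*} [Fintype ι] [Fintype κ]

def run (A : α → Matrix ι ι ℝ) (v₀ : ι → ℝ) (w : List α) : ι → ℝ :=
  w.foldl (fun v c => A c *ᵥ v) v₀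

noncomputable def acceptProb (v : ι → ℝ) (j : ι) : ℝ :=
  |v j| / ∑ i, |v i|

variable (ι) in
/-- `Ad` plays the role of the end-marker matrix `A_$`, and `{j}` is the accepting set. -/
def ExactlySeparable (x : List α) (Y : Finset (List α)) : Prop :=
  ∃ (A : α → Matrix ι ι ℝ) (Ad : Matrix ι ι ℝ) (v₀ : ι → ℝ) (j : ι),
    (∀ σ, ∀ c, ∑ r, A σ r c = 1) ∧ (∀ c, ∑ r, Ad r c = 1) ∧ (∑ i, v₀ i = 1) ∧
      acceptProb (Ad *ᵥ run A v₀ x) j = 1 ∧ ∀ y ∈ Y, acceptProb (Ad *ᵥ run A v₀ y) j = 0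

theorem sum_mulVec_of_colSum {A : Matrix ι ι ℝ} (hA : ∀ c, ∑ r, A r c = 1) (v : ι → ℝ) :
    ∑ r, (A *ᵥ v) r = ∑ i, v i := by
  simp only [mulVec, dotProduct]
  rw [Finset.sum_comm]
  simp only [← Finset.sum_mul, hA, one_mul]

theorem sum_run {A : α → Matrix ι ι ℝ} (hA : ∀ σ c, ∑ r, A σ r c = 1) (v₀ : ι → ℝ)
    (w : List α) : ∑ i, run A v₀ w i = ∑ i, v₀ i := by
  induction w generalizing v₀ with
  | nil => rfl
  | cons c w ih => exact (ih _).trans (sum_mulVec_of_colSum (hA c) v₀)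

theorem reindex_mulVec_comp (e : ι ≃ κ) (M : Matrix ι ι ℝ) (v : ι → ℝ) :
    reindex e e M *ᵥ (v ∘ e.symm) = (M *ᵥ v) ∘ e.symm := by
  rw [reindex_apply, submatrix_mulVec_equiv, Equiv.symm_symm, Function.comp_assoc,
    e.symm_comp_self, Function.comp_id]

theorem run_reindex (e : ι ≃ κ) (A : α → Matrix ι ι ℝ) (v₀ : ι → ℝ) (w : List α) :
    run (fun c => reindex e e (A c)) (v₀ ∘ e.symm) w = run A v₀ w ∘ e.symm :=
  List.foldl_hom (· ∘ e.symm) fun v c => reindex_mulVec_comp e (A c) v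

theorem acceptProb_comp_equiv (e : ι ≃ κ) (v : ι → ℝ) (j : ι) :
    acceptProb (v ∘ e.symm) (e j) = acceptProb v j := by
  simp only [acceptProb, Function.comp_apply, Equiv.symm_apply_apply]
  rw [Equiv.sum_comp e.symm (fun i => |v i|)]

theorem ExactlySeparable.of_equiv {x : List α} {Y : Finset (List α)} (e : ι ≃ κ)
    (h : ExactlySeparable ι x Y) : ExactlySeparable κ x Y := by
  obtain ⟨A, Ad, v₀, j, hA, hAd, hv₀, hx, hY⟩ := h
  have hcol : ∀ (M : Matrix ι ι ℝ) (c : κ), ∑ r, reindex e e M r c = ∑ r, M r (e.symm c) :=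
    fun M c => Equiv.sum_comp e.symm (fun r => M r (e.symm c))
  have hfinal : ∀ w, reindex e e Ad *ᵥ run (fun c => reindex e e (A c)) (v₀ ∘ e.symm) w
      = (Ad *ᵥ run A v₀ w) ∘ e.symm := fun w => by
    rw [run_reindex, reindex_mulVec_comp]
  refine ⟨fun c => reindex e e (A c), reindex e e Ad, v₀ ∘ e.symm, e j,
    fun σ c => (hcol _ c).trans (hA σ _), fun c => (hcol _ c).trans (hAd _), ?_, ?_, ?_⟩
  · rwa [← Equiv.sum_comp e.symm (fun i => v₀ i)] at hv₀
  · rw [hfinal, acceptProb_comp_equiv, hx]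
  · intro y hy
    rw [hfinal, acceptProb_comp_equiv, hY y hy]

end Automaton

section EndMarker

variable {α ι : Type*} [Fintype ι] [DecidableEq ι]

def endMarker (j j' : ι) (φ : ι → ℝ) : Matrix ι ι ℝ :=
  vecMulVec (Pi.single j 1) φ + vecMulVec (Pi.single j' 1) (1 - φ)

theorem endMarker_colSum (j j' : ι) (φ : ι → ℝ) (c : ι) : ∑ r, endMarker j j' φ r c = 1 := by
  simp [endMarker, vecMulVec_apply, Finset.sum_add_distrib, ← Finset.sum_mul]

theorem endMarker_mulVec (j j' : ι) (φ v : ι → ℝ) :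
    endMarker j j' φ *ᵥ v = (φ ⬝ᵥ v) • Pi.single j 1 + (∑ i, v i - φ ⬝ᵥ v) • Pi.single j' 1 := by
  simp only [endMarker, add_mulVec, vecMulVec_mulVec, op_smul_eq_smul, sub_dotProduct,
    one_dotProduct]

theorem acceptProb_single (j : ι) : acceptProb (Pi.single j (1 : ℝ)) j = 1 := by
  simp [acceptProb, Pi.single_apply, apply_ite]

theorem exactlySeparable_of_coord [Nontrivial ι] {A : α → Matrix ι ι ℝ} {v₀ : ι → ℝ}
    (hA : ∀ σ c, ∑ r, A σ r c = 1) (hv₀ : ∑ i, v₀ i = 1) (k : ι) {x : List α}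
    {Y : Finset (List α)} (hx : run A v₀ x k ≠ 0) (hY : ∀ y ∈ Y, run A v₀ y k = 0) :
    ExactlySeparable ι x Y := by
  obtain ⟨j', hj'⟩ := exists_ne k
  refine ⟨A, endMarker k j' (Pi.single k (run A v₀ x k)⁻¹), v₀, k, hA, endMarker_colSum _ _ _,
    hv₀, ?_, fun y hy => ?_⟩
  · rw [endMarker_mulVec, single_dotProduct, sum_run hA, hv₀, inv_mul_cancel₀ hx, sub_self,
      zero_smul, add_zero, one_smul, acceptProb_single]
  · simp [acceptProb, endMarker_mulVec, single_dotProduct, hY y hy, hj'.symm]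

end EndMarker

section Tensor

variable {α ι κ : Type*} [Fintype ι] [DecidableEq ι] [Fintype κ]

def piKronecker (B : ι → Matrix κ κ ℝ) : Matrix (ι → κ) (ι → κ) ℝ :=
  of fun f g => ∏ i, B i (f i) (g i)

def piTensor (v : ι → κ → ℝ) : (ι → κ) → ℝ :=
  fun g => ∏ i, v i (g i)

theorem piKronecker_mulVec_piTensor (B : ι → Matrix κ κ ℝ) (v : ι → κ → ℝ) :
    piKronecker B *ᵥ piTensor v = piTensor fun i => B i *ᵥ v i := by
  ext f
  simp only [piKronecker, piTensor, mulVec, dotProduct, of_apply, Fintype.prod_sum,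
    Finset.prod_mul_distrib]

theorem sum_piTensor (v : ι → κ → ℝ) : ∑ g, piTensor v g = ∏ i, ∑ a, v i a :=
  (Fintype.prod_sum v).symm

theorem piKronecker_colSum (B : ι → Matrix κ κ ℝ) (g : ι → κ) :
    ∑ f, piKronecker B f g = ∏ i, ∑ a, B i a (g i) :=
  (Fintype.prod_sum fun i a => B i a (g i)).symm

theorem run_piKronecker (B : ι → α → Matrix κ κ ℝ) (v : ι → κ → ℝ) (w : List α) :
    run (fun c => piKronecker fun i => B i c) (piTensor v) w =
      piTensor fun i => run (B i) (v i) w := by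
  induction w generalizing v with
  | nil => rfl
  | cons c w ih =>
    exact (congrArg (List.foldl _ · w) (piKronecker_mulVec_piTensor _ v)).trans (ih _)

end Tensor

section Counter

variable {α : Type*}

def counterMatrix (a b : ℝ) : Matrix (Fin 2) (Fin 2) ℝ :=
  !![a + b, b; 1 - a - b, 1 - b]

def counterVec (s : ℝ) : Fin 2 → ℝ :=
  ![s, 1 - s]

theorem counterMatrix_colSum (a b : ℝ) (c : Fin 2) : ∑ r, counterMatrix a b r c = 1 := by
  fin_cases c <;> simp [counterMatrix, Fin.sum_univ_two]

theorem sum_counterVec (s : ℝ) : ∑ i, counterVec s i = 1 := by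
  simp [counterVec, Fin.sum_univ_two]

theorem counterMatrix_mulVec (a b s : ℝ) :
    counterMatrix a b *ᵥ counterVec s = counterVec (a * s + b) := by
  ext i
  fin_cases i <;> simp [counterMatrix, counterVec, mulVec, dotProduct, Fin.sum_univ_two] <;> ring

theorem run_counterMatrix (a : ℝ) (b : α → ℝ) (s : ℝ) (w : List α) :
    run (fun c => counterMatrix a (b c)) (counterVec s) w =
      counterVec (w.foldl (fun t c => a * t + b c) s) :=
  List.foldl_hom counterVec fun t c => counterMatrix_mulVec a (b c) t

end Counter

section WordValue

variable {k : ℕ}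

/-- Digits are `1, …, k` rather than `0, …, k-1`, so that no two words share a value. -/
def wordValue (w : List (Fin k)) : ℕ :=
  w.foldl (fun t (c : Fin k) => (k + 1) * t + (c + 1)) 0

theorem wordValue_append_singleton (w : List (Fin k)) (c : Fin k) :
    wordValue (w ++ [c]) = (k + 1) * wordValue w + (c + 1) := by
  simp [wordValue, List.foldl_append]

theorem wordValue_injective : Function.Injective (wordValue (k := k)) := by
  intro a b h
  induction a using List.reverseRecOn generalizing b with
  | nil =>
    cases b using List.reverseRecOn with
    | nil => rfl
    | append_singleton b c =>
      rw [wordValue_append_singleton] at h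
      exact absurd h (by simp [wordValue])
  | append_singleton a c ih =>
    cases b using List.reverseRecOn with
    | nil =>
      rw [wordValue_append_singleton] at h
      exact absurd h (by simp [wordValue])
    | append_singleton b c' =>
      rw [wordValue_append_singleton, wordValue_append_singleton] at h
      have hc : (c : ℕ) + 1 < k + 1 := by omega
      have hc' : (c' : ℕ) + 1 < k + 1 := by omega
      have hdigit := congrArg (· % (k + 1)) h
      have hprefix := congrArg (· / (k + 1)) h
      simp only [Nat.mul_add_mod, Nat.mod_eq_of_lt hc, Nat.mod_eq_of_lt hc'] at hdigit
      simp only [Nat.mul_add_div (Nat.succ_pos k), Nat.div_eq_of_lt hc, Nat.div_eq_of_lt hc',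
        add_zero] at hprefix
      rw [ih hprefix, Fin.ext (Nat.add_right_cancel hdigit)]

theorem foldl_eq_wordValue_sub (y w : List (Fin k)) :
    w.foldl (fun (t : ℝ) (c : Fin k) => (k + 1) * t + ((c : ℕ) + 1 + k * wordValue y))
      (-(wordValue y : ℝ)) =
      wordValue w - wordValue y := by
  rw [← zero_sub, ← Nat.cast_zero (R := ℝ)]
  refine List.foldl_hom (fun t : ℕ => (t : ℝ) - wordValue y) fun t c => ?_
  push_cast
  ring

end WordValue

theorem exactlySeparable_fun_fin_two {k : ℕ} (Y : Finset (List (Fin k))) (hY : Y.Nonempty)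
    {x : List (Fin k)} (hx : x ∉ Y) : ExactlySeparable (Y → Fin 2) x Y := by
  classical
  have := hY.to_subtype
  let B : Y → Fin k → Matrix (Fin 2) (Fin 2) ℝ :=
    fun y c => counterMatrix (k + 1) ((c : ℕ) + 1 + k * wordValue (y : List (Fin k)))
  let v : Y → Fin 2 → ℝ := fun y => counterVec (-(wordValue (y : List (Fin k)) : ℝ))
  have hrun : ∀ w, run (fun c => piKronecker fun y => B y c) (piTensor v) w 0 =
      ∏ y : Y, ((wordValue w : ℝ) - wordValue (y : List (Fin k))) := fun w => by
    simp only [run_piKronecker, B, v, run_counterMatrix, foldl_eq_wordValue_sub]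
    rfl
  refine exactlySeparable_of_coord (A := fun c => piKronecker fun y => B y c)
    (v₀ := piTensor v) (fun c g => ?_) ?_ 0 ?_ fun y hy => ?_
  · simp only [piKronecker_colSum, B, counterMatrix_colSum, Finset.prod_const_one]
  · simp only [sum_piTensor, v, sum_counterVec, Finset.prod_const_one]
  · rw [hrun]
    refine Finset.prod_ne_zero_iff.2 fun y _ => sub_ne_zero.2 fun h => ?_
    exact hx (wordValue_injective (Nat.cast_injective h) ▸ y.2)
  · rw [hrun]
    exact Finset.prod_eq_zero (Finset.mem_univ ⟨y, hy⟩) (sub_self _)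

end AffineAutomaton

open AffineAutomaton in
/-- a binary word `x` outside a finite nonempty set `Y` of binary words
(with `|Y| = n`) is separated from every member of `Y` exactly by a `2^n`-state AfA:
`x` is accepted with probability 1 and every `y ∈ Y` with probability 0. -/
theorem stmt17 (Y : Finset (List (Fin 2))) (hY : Y.Nonempty) (n : ℕ) (hn : Y.card = n)
    (x : List (Fin 2)) (hx : x ∉ Y) :
    ∃ (A : Fin 2 → Matrix (Fin (2 ^ n)) (Fin (2 ^ n)) ℝ)
      (Ad : Matrix (Fin (2 ^ n)) (Fin (2 ^ n)) ℝ)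
      (v₀ : Fin (2 ^ n) → ℝ) (j : Fin (2 ^ n)),
      (∀ σ : Fin 2, ∀ c, ∑ r, A σ r c = 1) ∧
      (∀ c, ∑ r, Ad r c = 1) ∧
      (∑ i, v₀ i = 1) ∧
      (|Ad.mulVec (x.foldl (fun v c => (A c).mulVec v) v₀) j| /
        (∑ i, |Ad.mulVec (x.foldl (fun v c => (A c).mulVec v) v₀) i|) = 1) ∧
      (∀ y ∈ Y,
        |Ad.mulVec (y.foldl (fun v c => (A c).mulVec v) v₀) j| /
          (∑ i, |Ad.mulVec (y.foldl (fun v c => (A c).mulVec v) v₀) i|) = 0) := by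
  have e : (Y → Fin 2) ≃ Fin (2 ^ n) := Fintype.equivFinOfCardEq (by simp [hn])
  exact (exactlySeparable_fun_fin_two Y hY hx).of_equiv e
end

section
/- Let X and Y be disjoint finite sets of binary words with 1 < |X| = m, and let ε > 0. Then there exist real affine matrices A_0, A_1, A_$ of size 2^m × 2^m (each column summing to 1), an affine vector v₀ ∈ ℝ^{2^m}, and an accepting coordinate such that the resulting 2^m-state AfA accepts every word of X with probability 1 and accepts every binary word not in X (in particular every word of Y) with probability at most ε; that is, X and Y are separated by a 2^{|X|}-state AfA with arbitrarily small one-sided bounded error. -/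
open Matrix

/-!
Read a word `z` as the natural number `encode z` whose base-3 digits, all `1` or `2`, are its
letters in reverse order; a letter `c` acts on the encoding as the affine map `u ↦ 3u + c + 1`.
The 2-state affine automaton on `(u, 1 - u)` realises such a map, so its Kronecker power indexed
by `X` (with `2 ^ |X|` states) carries the tensor `⊗ₓ (u, 1 - u)`, on which the linear form
`⊗ₓ (1 - encode x, -encode x)` takes the integer value `∏ₓ (encode z - encode x)`. This vanishes
exactly on `X` and otherwise has absolute value at least `1`. The end-marker puts `±ε⁻¹` times it
on two coordinates and `1` on the accepting one, so `z` is accepted with probability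
`1 / (2 ε⁻¹ |∏ₓ (encode z - encode x)| + 1)`.
-/

section PiKronecker

variable {κ R : Type*} {ι : κ → Type*} [Fintype κ] [DecidableEq κ] [∀ k, Fintype (ι k)]
  [CommSemiring R]

def piTensor (v : ∀ k, ι k → R) : (∀ k, ι k) → R := fun i => ∏ k, v k (i k)

def piKron (A : ∀ k, Matrix (ι k) (ι k) R) : Matrix (∀ k, ι k) (∀ k, ι k) R :=
  of fun i j => ∏ k, A k (i k) (j k)

theorem sum_piTensor (v : ∀ k, ι k → R) : ∑ i, piTensor v i = ∏ k, ∑ r, v k r :=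
  (Fintype.prod_sum v).symm

theorem piTensor_dotProduct_piTensor (w v : ∀ k, ι k → R) :
    piTensor w ⬝ᵥ piTensor v = ∏ k, w k ⬝ᵥ v k := by
  simp only [dotProduct, piTensor, ← Finset.prod_mul_distrib]
  exact (Fintype.prod_sum fun k r => w k r * v k r).symm

theorem sum_piKron_apply (A : ∀ k, Matrix (ι k) (ι k) R) (j : ∀ k, ι k) :
    ∑ i, piKron A i j = ∏ k, ∑ r, A k r (j k) :=
  sum_piTensor fun k r => A k r (j k)

theorem piKron_mulVec_piTensor (A : ∀ k, Matrix (ι k) (ι k) R) (v : ∀ k, ι k → R) :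
    piKron A *ᵥ piTensor v = piTensor fun k => A k *ᵥ v k :=
  funext fun i => piTensor_dotProduct_piTensor (fun k => A k (i k)) v

theorem foldl_piKron_mulVec_piTensor {α : Type*} (A : α → ∀ k, Matrix (ι k) (ι k) R)
    (v : ∀ k, ι k → R) (z : List α) :
    z.foldl (fun w c => piKron (A c) *ᵥ w) (piTensor v) =
      piTensor fun k => z.foldl (fun w c => A c k *ᵥ w) (v k) := by
  induction z generalizing v with
  | nil => rfl
  | cons c z ih => simp only [List.foldl_cons, piKron_mulVec_piTensor, ih]

end PiKronecker

section AffineTwoState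

variable {R : Type*} [CommRing R]

def affineVec (u : R) : Fin 2 → R := ![u, 1 - u]

def affineMat (a b : R) : Matrix (Fin 2) (Fin 2) R := !![a + b, b; 1 - a - b, 1 - b]

theorem sum_affineVec (u : R) : ∑ i, affineVec u i = 1 := by
  simp [affineVec]

theorem sum_affineMat_apply (a b : R) (j : Fin 2) : ∑ i, affineMat a b i j = 1 := by
  fin_cases j <;> simp [affineMat, Fin.sum_univ_two]

theorem affineMat_mulVec_affineVec (a b u : R) :
    affineMat a b *ᵥ affineVec u = affineVec (a * u + b) := by
  ext i; fin_cases i <;> simp [affineMat, affineVec, mulVec, dotProduct, Fin.sum_univ_two] <;> ring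

theorem dotProduct_affineVec (t u : R) : ![1 - t, -t] ⬝ᵥ affineVec u = u - t := by
  simp [affineVec, dotProduct, Fin.sum_univ_two]; ring

theorem foldl_affineMat_mulVec {α : Type*} (a b : α → R) (u : R) (z : List α) :
    z.foldl (fun w c => affineMat (a c) (b c) *ᵥ w) (affineVec u) =
      affineVec (z.foldl (fun x c => a c * x + b c) u) :=
  List.foldl_hom affineVec fun u c => affineMat_mulVec_affineVec (a c) (b c) u

end AffineTwoState

def encode (z : List (Fin 2)) : ℕ := z.foldl (fun a c => 3 * a + (c.val + 1)) 0

theorem encode_eq_ofDigits (z : List (Fin 2)) :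
    encode z = Nat.ofDigits 3 (z.reverse.map fun c => c.val + 1) := by
  rw [encode, List.foldl_eq_foldr_reverse, Nat.ofDigits_eq_foldr, List.foldr_map]
  simp only [Nat.cast_id, add_comm]

theorem encode_injective : Function.Injective encode := by
  have hdigits (z : List (Fin 2)) :
      Nat.digits 3 (encode z) = z.reverse.map fun c => c.val + 1 := by
    rw [encode_eq_ofDigits]
    refine Nat.digits_ofDigits 3 (by norm_num) _ ?_ fun _ => ?_
    · simp only [List.mem_map]
      rintro _ ⟨c, -, rfl⟩
      omega
    · simp
  intro z z' h
  have hmap := hdigits z ▸ hdigits z' ▸ congrArg (Nat.digits 3) h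
  exact List.reverse_injective (List.map_injective_iff.2 (fun c c' h => Fin.ext (by omega)) hmap)

theorem cast_encode (z : List (Fin 2)) :
    (encode z : ℝ) = z.foldl (fun u c => 3 * u + (c.val + 1 : ℝ)) 0 := by
  have h := List.foldl_hom (Nat.cast : ℕ → ℝ) (l := z) (init := 0)
    (g₁ := fun a c => 3 * a + (c.val + 1)) (g₂ := fun u c => 3 * u + (c.val + 1 : ℝ))
    fun a c => by push_cast; ring
  rw [Nat.cast_zero] at h
  exact h.symm

section Acceptance

variable {α ι κ : Type*} [Fintype ι] [Fintype κ]

def finalVec (A : α → Matrix ι ι ℝ) (Ad : Matrix ι ι ℝ) (v₀ : ι → ℝ) (z : List α) : ι → ℝ :=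
  Ad *ᵥ z.foldl (fun v c => A c *ᵥ v) v₀

noncomputable def acceptProb (A : α → Matrix ι ι ℝ) (Ad : Matrix ι ι ℝ) (v₀ : ι → ℝ) (j : ι)
    (z : List α) : ℝ :=
  |finalVec A Ad v₀ z j| / ∑ i, |finalVec A Ad v₀ z i|

theorem finalVec_submatrix (A : α → Matrix ι ι ℝ) (Ad : Matrix ι ι ℝ) (v₀ : ι → ℝ) (e : κ ≃ ι)
    (z : List α) :
    finalVec (fun c => (A c).submatrix e e) (Ad.submatrix e e) (v₀ ∘ e) z =
      finalVec A Ad v₀ z ∘ e := by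
  have hrun : z.foldl (fun v c => (A c).submatrix e e *ᵥ v) (v₀ ∘ e) =
      z.foldl (fun v c => A c *ᵥ v) v₀ ∘ e :=
    List.foldl_hom (· ∘ e) fun v c => by simp [submatrix_mulVec_equiv, Function.comp_assoc]
  rw [finalVec, finalVec, hrun, submatrix_mulVec_equiv, Function.comp_assoc, e.self_comp_symm,
    Function.comp_id]

theorem acceptProb_submatrix (A : α → Matrix ι ι ℝ) (Ad : Matrix ι ι ℝ) (v₀ : ι → ℝ) (j : ι)
    (e : κ ≃ ι) (z : List α) :
    acceptProb (fun c => (A c).submatrix e e) (Ad.submatrix e e) (v₀ ∘ e) (e.symm j) z =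
      acceptProb A Ad v₀ j z := by
  simp only [acceptProb, finalVec_submatrix, Function.comp_apply, Equiv.apply_symm_apply,
    e.sum_comp fun i => |finalVec A Ad v₀ z i|]

end Acceptance

section Readout

variable {α ι : Type*} [Fintype ι] [DecidableEq ι]

/- Rows `p` and `n` carry `±φ`, which cancel in every column sum; row `a` reads off the total
mass `∑ i, v i = 1` of the state. -/
def readout (φ : ι → ℝ) (p n a : ι) : Matrix ι ι ℝ :=
  vecMulVec (Pi.single p 1 - Pi.single n 1) φ + vecMulVec (Pi.single a 1) 1

theorem sum_readout_apply (φ : ι → ℝ) (p n a j : ι) : ∑ i, readout φ p n a i j = 1 := by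
  simp [readout, vecMulVec_apply, Finset.sum_add_distrib, ← Finset.sum_mul, Finset.sum_sub_distrib]

theorem readout_mulVec (φ v : ι → ℝ) (p n a : ι) (hv : ∑ i, v i = 1) :
    readout φ p n a *ᵥ v = (φ ⬝ᵥ v) • (Pi.single p 1 - Pi.single n 1) + Pi.single a 1 := by
  rw [readout, add_mulVec, vecMulVec_mulVec, vecMulVec_mulVec, one_dotProduct, hv]
  simp only [op_smul_eq_smul, one_smul]

theorem sum_abs_smul_sub_single_add_single (s : ℝ) {p n a : ι} (hpn : p ≠ n) (hpa : p ≠ a)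
    (hna : n ≠ a) :
    ∑ i, |(s • (Pi.single p 1 - Pi.single n 1) + Pi.single a 1 : ι → ℝ) i| = 2 * |s| + 1 := by
  have hsplit (i : ι) : |(s • (Pi.single p 1 - Pi.single n 1) + Pi.single a 1 : ι → ℝ) i| =
      (Pi.single p |s| + Pi.single n |s| + Pi.single a 1 : ι → ℝ) i := by
    by_cases hip : i = p
    · subst hip; simp [hpn, hpa]
    by_cases hin : i = n
    · subst hin; simp [hpn.symm, hna]
    by_cases hia : i = a
    · subst hia; simp [hpa.symm, hna.symm]
    simp [hip, hin, hia]
  rw [Finset.sum_congr rfl fun i _ => hsplit i]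
  simp only [Pi.add_apply, Finset.sum_add_distrib, Finset.sum_pi_single', Finset.mem_univ, if_true]
  ring

theorem acceptProb_readout (A : α → Matrix ι ι ℝ) (v₀ φ : ι → ℝ) {p n a : ι} (hpn : p ≠ n)
    (hpa : p ≠ a) (hna : n ≠ a) (z : List α)
    (hv : ∑ i, z.foldl (fun v c => A c *ᵥ v) v₀ i = 1) :
    acceptProb A (readout φ p n a) v₀ a z =
      1 / (2 * |φ ⬝ᵥ z.foldl (fun v c => A c *ᵥ v) v₀| + 1) := by
  rw [acceptProb, finalVec, readout_mulVec _ _ _ _ _ hv,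
    sum_abs_smul_sub_single_add_single _ hpn hpa hna]
  simp [hpa.symm, hna.symm]

end Readout

section TensorMachine

variable {κ : Type*} [Fintype κ] [DecidableEq κ]

def letterMat (c : Fin 2) : Matrix (κ → Fin 2) (κ → Fin 2) ℝ :=
  piKron fun _ => affineMat 3 (c.val + 1)

def startVec : (κ → Fin 2) → ℝ := piTensor fun _ => affineVec 0

def prodSubForm (t : κ → ℝ) : (κ → Fin 2) → ℝ := piTensor fun k => ![1 - t k, -t k]

theorem sum_letterMat_apply (c : Fin 2) (j : κ → Fin 2) : ∑ i, letterMat c i j = 1 := by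
  simp only [letterMat, sum_piKron_apply, sum_affineMat_apply, Finset.prod_const_one]

theorem sum_startVec : ∑ i, (startVec : (κ → Fin 2) → ℝ) i = 1 := by
  simp only [startVec, sum_piTensor, sum_affineVec, Finset.prod_const_one]

theorem foldl_letterMat_startVec (z : List (Fin 2)) :
    z.foldl (fun v c => letterMat c *ᵥ v) (startVec : (κ → Fin 2) → ℝ) =
      piTensor fun _ => affineVec (encode z : ℝ) := by
  simp only [letterMat, startVec, foldl_piKron_mulVec_piTensor, foldl_affineMat_mulVec, cast_encode]

theorem acceptProb_letterMat_readout (t : κ → ℝ) (N : ℝ) {p n a : κ → Fin 2} (hpn : p ≠ n)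
    (hpa : p ≠ a) (hna : n ≠ a) (z : List (Fin 2)) :
    acceptProb letterMat (readout (N • prodSubForm t) p n a) startVec a z =
      1 / (2 * |N * ∏ k, ((encode z : ℝ) - t k)| + 1) := by
  have hrun := foldl_letterMat_startVec (κ := κ) z
  rw [acceptProb_readout _ _ _ hpn hpa hna z (by
    simp only [hrun, sum_piTensor, sum_affineVec, Finset.prod_const_one]), hrun,
    smul_dotProduct, prodSubForm, piTensor_dotProduct_piTensor]
  simp only [dotProduct_affineVec, smul_eq_mul]

end TensorMachine

theorem one_le_abs_prod_natCast_sub {κ : Type*} (s : Finset κ) (a : ℕ) (b : κ → ℕ)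
    (h : ∀ k ∈ s, b k ≠ a) : 1 ≤ |∏ k ∈ s, ((a : ℝ) - b k)| := by
  have hint : ∏ k ∈ s, ((a : ℤ) - b k) ≠ 0 :=
    Finset.prod_ne_zero_iff.2 fun k hk => sub_ne_zero.2 (by exact_mod_cast (h k hk).symm)
  exact_mod_cast Int.one_le_abs hint

theorem stmt18_general (X : Finset (List (Fin 2)))
    (m : ℕ) (hm : X.card = m) (hm1 : 1 < m) (ε : ℝ) (hε : 0 < ε) :
    ∃ (A : Fin 2 → Matrix (Fin (2 ^ m)) (Fin (2 ^ m)) ℝ)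
      (Ad : Matrix (Fin (2 ^ m)) (Fin (2 ^ m)) ℝ)
      (v₀ : Fin (2 ^ m) → ℝ) (j : Fin (2 ^ m)),
      (∀ σ : Fin 2, ∀ c, ∑ r, A σ r c = 1) ∧
      (∀ c, ∑ r, Ad r c = 1) ∧
      (∑ i, v₀ i = 1) ∧
      (∀ x ∈ X,
        |Ad.mulVec (x.foldl (fun v c => (A c).mulVec v) v₀) j| /
          (∑ i, |Ad.mulVec (x.foldl (fun v c => (A c).mulVec v) v₀) i|) = 1) ∧
      (∀ z : List (Fin 2), z ∉ X →
        |Ad.mulVec (z.foldl (fun v c => (A c).mulVec v) v₀) j| /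
          (∑ i, |Ad.mulVec (z.foldl (fun v c => (A c).mulVec v) v₀) i|) ≤ ε) := by
  have hcard : Fintype.card (X → Fin 2) = 2 ^ m := by simp [hm]
  obtain ⟨f⟩ : Nonempty (Fin 3 ↪ (X → Fin 2)) :=
    Function.Embedding.nonempty_of_card_le (by
      rw [Fintype.card_fin, hcard]
      exact (by norm_num : 3 ≤ 2 ^ 2).trans (Nat.pow_le_pow_right two_pos hm1))
  have hf {i j : Fin 3} (h : i ≠ j) : f i ≠ f j := f.injective.ne h
  let e : Fin (2 ^ m) ≃ (X → Fin 2) := (Fintype.equivFinOfCardEq hcard).symm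
  let Ad := readout (ε⁻¹ • prodSubForm fun x : X => (encode x : ℝ)) (f 0) (f 1) (f 2)
  have hprob (z : List (Fin 2)) := acceptProb_letterMat_readout (fun x : X => (encode x : ℝ)) ε⁻¹
    (hf (show (0 : Fin 3) ≠ 1 by decide)) (hf (show (0 : Fin 3) ≠ 2 by decide))
    (hf (show (1 : Fin 3) ≠ 2 by decide)) z
  refine ⟨fun c => (letterMat c).submatrix e e, Ad.submatrix e e, startVec ∘ e, e.symm (f 2),
    fun c j => (e.sum_comp _).trans (sum_letterMat_apply c _),
    fun j => (e.sum_comp _).trans (sum_readout_apply _ _ _ _ _),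
    (e.sum_comp _).trans sum_startVec, fun x hx => ?_, fun z hz => ?_⟩
  · refine (acceptProb_submatrix _ _ _ _ e x).trans ((hprob x).trans ?_)
    rw [Finset.prod_eq_zero (Finset.mem_univ ⟨x, hx⟩) (sub_self _)]
    simp
  · refine (acceptProb_submatrix _ _ _ _ e z).trans_le ((hprob z).trans_le ?_)
    have hgap := one_le_abs_prod_natCast_sub Finset.univ (encode z) (fun x : X => encode x)
      fun x _ hxz => hz (encode_injective hxz ▸ x.2)
    rw [abs_mul, abs_inv, abs_of_pos hε, div_le_iff₀ (by positivity)]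
    field_simp
    linarith

/-- two disjoint finite sets `X, Y` of binary words with `|X| = m > 1`
are separated by a `2^m`-state AfA with arbitrarily small one-sided error: each word
of `X` is accepted with probability 1 and every binary word outside `X` (in particular
every word of `Y`) with probability at most `ε`. -/
theorem stmt18 (X Y : Finset (List (Fin 2))) (hdisj : Disjoint X Y)
    (m : ℕ) (hm : X.card = m) (hm1 : 1 < m) (ε : ℝ) (hε : 0 < ε) :
    ∃ (A : Fin 2 → Matrix (Fin (2 ^ m)) (Fin (2 ^ m)) ℝ)
      (Ad : Matrix (Fin (2 ^ m)) (Fin (2 ^ m)) ℝ)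
      (v₀ : Fin (2 ^ m) → ℝ) (j : Fin (2 ^ m)),
      (∀ σ : Fin 2, ∀ c, ∑ r, A σ r c = 1) ∧
      (∀ c, ∑ r, Ad r c = 1) ∧
      (∑ i, v₀ i = 1) ∧
      (∀ x ∈ X,
        |Ad.mulVec (x.foldl (fun v c => (A c).mulVec v) v₀) j| /
          (∑ i, |Ad.mulVec (x.foldl (fun v c => (A c).mulVec v) v₀) i|) = 1) ∧
      (∀ z : List (Fin 2), z ∉ X →
        |Ad.mulVec (z.foldl (fun v c => (A c).mulVec v) v₀) j| /
          (∑ i, |Ad.mulVec (z.foldl (fun v c => (A c).mulVec v) v₀) i|) ≤ ε) :=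
  stmt18_general X m hm hm1 ε hε
end
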